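/- arXiv:2301.09518 — 3 statements merged into one kernel-verified Lean document; each statement's English description precedes it below -/
import Mathlib

section
/- In the setting of a generalised Morita context (A_i; M_ij; φ_ikj) of size n with A_t = R, a Morita context (R, S; N, L; ζ, θ), and their composition (A′_i; M′_ij; φ′_ikj), equip the column-excision N_m with: (i) the left action of [A_i; M_ij] with components β_ikj = φ_ikj for j ≠ t and β_ikt = φ_ikt ⊗ 1_N for j = t, i.e. (c·x)_{ij} = Σ_k β_ikj(c_ik ⊗ x_kj); and (ii) the right action of [A′_i; M′_ij] with components β′_ikj = φ′_ikj for i ≠ t, and on row t: β′_ttt(r ⊗ n ⊗ s) = r ⊗ (n·s), β′_tti(r ⊗ n ⊗ l ⊗ m) = (r·ζ(n ⊗ l))·m for i ≠ t, β′_tht = φ_tht ⊗ 1_N for h ≠ t, and β′_thi = φ_thi for h, i ≠ t. Then (i) makes N_m a left [A_i; M_ij]-module, (ii) makes N_m a right [A′_i; M′_ij]-module, and (iii) these two actions commute, so N_m is an [A_i; M_ij]–[A′_i; M′_ij]-bimodule. -/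
universe u

open MulOpposite

/-- A biadditive map `M × X → Z` which is balanced over the ring `A`,
where `ra` is a right `A`-action on `M` and `la` is a left `A`-action on `X`. -/
def IsBalancedMap (A : Type u) [Ring A] {M X Z : Type u}
    [AddCommGroup M] [AddCommGroup X] [AddCommGroup Z]
    (ra : M → A → M) (la : A → X → X) (g : M → X → Z) : Prop :=
  (∀ m m' x, g (m + m') x = g m x + g m' x) ∧
  (∀ m x x', g m (x + x') = g m x + g m x') ∧
  (∀ (a : A) m x, g (ra m a) x = g m (la a x))

/-- `τ : M × X → T` exhibits `T` as the tensor product `M ⊗[A] X` of a right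
`A`-module `M` and a left `A`-module `X`: `τ` is biadditive and `A`-balanced and
every biadditive `A`-balanced map out of `M × X` factors uniquely through `τ`. -/
structure IsBTensor (A : Type u) [Ring A] {M X : Type u}
    [AddCommGroup M] [AddCommGroup X]
    (ra : M → A → M) (la : A → X → X)
    (T : Type u) [AddCommGroup T] (τ : M → X → T) : Prop where
  balanced : IsBalancedMap A ra la τ
  lift : ∀ (Z : Type u) [AddCommGroup Z] (g : M → X → Z),
    IsBalancedMap A ra la g → ∃! h : T →+ Z, ∀ m x, h (τ m x) = g m x

/-- Surjectivity of the additive map `M ⊗ X → Z` induced by `g : M × X → Z`. -/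
def TensorSurj {M X Z : Type u} [AddCommGroup Z] (g : M → X → Z) : Prop :=
  AddSubgroup.closure {z : Z | ∃ m x, z = g m x} = ⊤

/-- A (classical) Morita context `(R, S; N, L; ζ, θ)`: `N` is an `R`–`S`-bimodule,
`L` is an `S`–`R`-bimodule, and `zeta : N ⊗[S] L → R`, `theta : L ⊗[R] N → S` are
bimodule homomorphisms (recorded here as balanced biadditive bilinear maps)
satisfying the mixed associativity conditions. -/
structure MoritaCtx (R S N L : Type u) [Ring R] [Ring S]
    [AddCommGroup N] [AddCommGroup L]
    [Module R N] [Module Sᵐᵒᵖ N] [SMulCommClass R Sᵐᵒᵖ N]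
    [Module S L] [Module Rᵐᵒᵖ L] [SMulCommClass S Rᵐᵒᵖ L] where
  zeta : N → L → R
  theta : L → N → S
  zeta_add_left : ∀ n n' l, zeta (n + n') l = zeta n l + zeta n' l
  zeta_add_right : ∀ n l l', zeta n (l + l') = zeta n l + zeta n l'
  zeta_balanced : ∀ (s : S) n l, zeta (op s • n) l = zeta n (s • l)
  zeta_left : ∀ (r : R) n l, zeta (r • n) l = r * zeta n l
  zeta_right : ∀ (r : R) n l, zeta n (op r • l) = zeta n l * r
  theta_add_left : ∀ l l' n, theta (l + l') n = theta l n + theta l' n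
  theta_add_right : ∀ l n n', theta l (n + n') = theta l n + theta l n'
  theta_balanced : ∀ (r : R) l n, theta (op r • l) n = theta l (r • n)
  theta_left : ∀ (s : S) l n, theta (s • l) n = s * theta l n
  theta_right : ∀ (s : S) l n, theta l (op s • n) = theta l n * s
  assoc_left : ∀ n l n', zeta n l • n' = op (theta l n') • n
  assoc_right : ∀ l n l', theta l n • l' = op (zeta n l') • l

/-- A generalised Morita context `(A_i; M_ij; φ_ikj)` of size `n`:
rings `A i`, `A_i`–`A_j`-bimodules `M i j` with `M i i` identified with the
regular bimodule `A i` via the additive isomorphisms `δ i`, and bimodule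
homomorphisms `φ i k j : M i k ⊗[A k] M k j → M i j` (recorded as balanced
biadditive bilinear maps) which restrict to the action/multiplication maps on
diagonal indices and satisfy the mixed associativity conditions. -/
structure GenMoritaCtx (n : ℕ) (A : Fin n → Type u) (M : Fin n → Fin n → Type u)
    [∀ i, Ring (A i)] [∀ i j, AddCommGroup (M i j)]
    [∀ i j, Module (A i) (M i j)] [∀ i j, Module ((A j)ᵐᵒᵖ) (M i j)]
    [∀ i j, SMulCommClass (A i) ((A j)ᵐᵒᵖ) (M i j)] where
  φ : ∀ i k j, M i k → M k j → M i j
  δ : ∀ i, A i ≃+ M i i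
  φ_add_left : ∀ i k j (x x' : M i k) (y : M k j), φ i k j (x + x') y = φ i k j x y + φ i k j x' y
  φ_add_right : ∀ i k j (x : M i k) (y y' : M k j), φ i k j x (y + y') = φ i k j x y + φ i k j x y'
  φ_balanced : ∀ i k j (a : A k) (x : M i k) (y : M k j), φ i k j (op a • x) y = φ i k j x (a • y)
  φ_smul_left : ∀ i k j (a : A i) (x : M i k) (y : M k j), φ i k j (a • x) y = a • φ i k j x y
  φ_smul_right : ∀ i k j (a : A j) (x : M i k) (y : M k j), φ i k j x (op a • y) = op a • φ i k j x y
  δ_mul_left : ∀ i (a b : A i), δ i (a * b) = a • δ i b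
  δ_mul_right : ∀ i (a b : A i), δ i (a * b) = op b • δ i a
  φ_diag_left : ∀ k j (a : A k) (y : M k j), φ k k j (δ k a) y = a • y
  φ_diag_right : ∀ i k (a : A k) (x : M i k), φ i k k x (δ k a) = op a • x
  φ_assoc : ∀ i h k j (x : M i h) (y : M h k) (z : M k j),
    φ i h j x (φ h k j y z) = φ i k j (φ i h k x y) z

variable {n : ℕ} {A : Fin n → Type u} {M : Fin n → Fin n → Type u}
    [∀ i, Ring (A i)] [∀ i j, AddCommGroup (M i j)]
    [∀ i j, Module (A i) (M i j)] [∀ i j, Module ((A j)ᵐᵒᵖ) (M i j)]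
    [∀ i j, SMulCommClass (A i) ((A j)ᵐᵒᵖ) (M i j)]

/-- The matrix multiplication `(x·y)_{ij} = ∑ k, φ_ikj (x_ik ⊗ y_kj)` on `⊕_{i,j} M i j`. -/
def matMul (ctx : GenMoritaCtx n A M) (x y : ∀ i j, M i j) : ∀ i j, M i j :=
  fun i j => ∑ k, ctx.φ i k j (x i k) (y k j)

/-- The identity matrix: `1_{A_i}` on the diagonal and `0` elsewhere. -/
def matOne (ctx : GenMoritaCtx n A M) : ∀ i j, M i j :=
  fun i j => if h : i = j then cast (congrArg (M i) h) (ctx.δ i 1) else 0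

/-- `ε : Λ ≃ ⊕_{i,j} M i j` exhibits the ring `Λ` as the generalised matrix ring
`[A_i; M_ij]` of the generalised Morita context `ctx`. -/
structure IsMatrixRing (ctx : GenMoritaCtx n A M) (Λ : Type u) [Ring Λ]
    (ε : Λ → ∀ i j, M i j) : Prop where
  bijective : Function.Bijective ε
  map_add : ∀ x y, ε (x + y) = ε x + ε y
  map_mul : ∀ x y, ε (x * y) = matMul ctx (ε x) (ε y)
  map_one : ε 1 = matOne ctx

/-- The scalar multiplication of an explicitly given module structure. -/
def msmul {Λ X : Type u} [Ring Λ] [AddCommGroup X] (inst : Module Λ X) (c : Λ) (x : X) : X :=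
  letI := inst; c • x

section Composition

variable (t : Fin n) (S N L : Type u) [Ring S]
  [AddCommGroup N] [AddCommGroup L]
  [Module (A t) N] [Module Sᵐᵒᵖ N] [SMulCommClass (A t) Sᵐᵒᵖ N]
  [Module S L] [Module ((A t)ᵐᵒᵖ) L] [SMulCommClass S ((A t)ᵐᵒᵖ) L]
  (A' : Fin n → Type u) (M' : Fin n → Fin n → Type u)
  [∀ i, Ring (A' i)] [∀ i j, AddCommGroup (M' i j)]
  [∀ i j, Module (A' i) (M' i j)] [∀ i j, Module ((A' j)ᵐᵒᵖ) (M' i j)]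
  [∀ i j, SMulCommClass (A' i) ((A' j)ᵐᵒᵖ) (M' i j)]

variable (A M)

/-- Data identifying the family `A'`, `M'` with the constituents of the composition
of a generalised Morita context `(A_i; M_ij; φ_ikj)` (with `A t = R`) with a Morita
context `(R, S; N, L; ζ, θ)`:  `A' t = S`, `A' i = A i` for `i ≠ t`, `M' t t = S`,
`M' i t = M i t ⊗[R] N` for `i ≠ t`, `M' t j = L ⊗[R] M t j` for `j ≠ t` and
`M' i j = M i j` for `i, j ≠ t`, where the tensor products are abstract tensor
products (universal property) and the identifications are compatible with all the
actions involved. -/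
structure CompSetup : Type u where
  ρ : ∀ i, i ≠ t → (A' i ≃+* A i)
  ρt : A' t ≃+* S
  ee : ∀ i j, i ≠ t → j ≠ t → (M i j ≃+ M' i j)
  tmulN : ∀ i, i ≠ t → (M i t → N → M' i t)
  tmulL : ∀ j, j ≠ t → (L → M t j → M' t j)
  uS : S ≃+ M' t t
  tmulN_tensor : ∀ i (hi : i ≠ t),
    IsBTensor (A t) (fun (m : M i t) a => op a • m) (fun a (x : N) => a • x)
      (M' i t) (tmulN i hi)
  tmulL_tensor : ∀ j (hj : j ≠ t),
    IsBTensor (A t) (fun (l : L) a => op a • l) (fun a (x : M t j) => a • x)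
      (M' t j) (tmulL j hj)
  ee_smul_left : ∀ i j (hi : i ≠ t) (hj : j ≠ t) (a' : A' i) (x : M i j),
    a' • ee i j hi hj x = ee i j hi hj (ρ i hi a' • x)
  ee_smul_right : ∀ i j (hi : i ≠ t) (hj : j ≠ t) (b' : A' j) (x : M i j),
    op b' • ee i j hi hj x = ee i j hi hj (op (ρ j hj b') • x)
  tmulN_smul_left : ∀ i (hi : i ≠ t) (a' : A' i) (m : M i t) (x : N),
    a' • tmulN i hi m x = tmulN i hi (ρ i hi a' • m) x
  tmulN_smul_right : ∀ i (hi : i ≠ t) (s' : A' t) (m : M i t) (x : N),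
    op s' • tmulN i hi m x = tmulN i hi m (op (ρt s') • x)
  tmulL_smul_left : ∀ j (hj : j ≠ t) (s' : A' t) (l : L) (m : M t j),
    s' • tmulL j hj l m = tmulL j hj (ρt s' • l) m
  tmulL_smul_right : ∀ j (hj : j ≠ t) (b' : A' j) (l : L) (m : M t j),
    op b' • tmulL j hj l m = tmulL j hj l (op (ρ j hj b') • m)
  uS_smul_left : ∀ (s' : A' t) (s : S), s' • uS s = uS (ρt s' * s)
  uS_smul_right : ∀ (s' : A' t) (s : S), op s' • uS s = uS (s * ρt s')

/-- `ctx'` is the composition of the generalised Morita context `ctx` (with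
`A t = R`) with the Morita context `mc = (R, S; N, L; ζ, θ)`: its identity
identifications are the given ones and its structure maps `φ'` are given by the
eight defining formulas of the composition (Definition 3.1 of the paper), stated
on pure tensors through the identifications of `cs`. -/
structure IsComposition (ctx : GenMoritaCtx n A M) (mc : MoritaCtx (A t) S N L)
    (cs : CompSetup A M t S N L A' M') (ctx' : GenMoritaCtx n A' M') : Prop where
  delta_spec : ∀ i (hi : i ≠ t) (a' : A' i),
    ctx'.δ i a' = cs.ee i i hi hi (ctx.δ i (cs.ρ i hi a'))
  delta_t_spec : ∀ s' : A' t, ctx'.δ t s' = cs.uS (cs.ρt s')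
  phi_ttt : ∀ s s' : S, ctx'.φ t t t (cs.uS s) (cs.uS s') = cs.uS (s * s')
  phi_itt : ∀ i (hi : i ≠ t) (m : M i t) (x : N) (s : S),
    ctx'.φ i t t (cs.tmulN i hi m x) (cs.uS s) = cs.tmulN i hi m (op s • x)
  phi_ttj : ∀ j (hj : j ≠ t) (s : S) (l : L) (m : M t j),
    ctx'.φ t t j (cs.uS s) (cs.tmulL j hj l m) = cs.tmulL j hj (s • l) m
  phi_tkt : ∀ k (hk : k ≠ t) (l : L) (m : M t k) (m' : M k t) (x : N),
    ctx'.φ t k t (cs.tmulL k hk l m) (cs.tmulN k hk m' x)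
      = cs.uS (mc.theta (op ((ctx.δ t).symm (ctx.φ t k t m m')) • l) x)
  phi_ikt : ∀ i k (hi : i ≠ t) (hk : k ≠ t) (z : M i k) (m : M k t) (x : N),
    ctx'.φ i k t (cs.ee i k hi hk z) (cs.tmulN k hk m x)
      = cs.tmulN i hi (ctx.φ i k t z m) x
  phi_tkj : ∀ k j (hk : k ≠ t) (hj : j ≠ t) (l : L) (m : M t k) (y : M k j),
    ctx'.φ t k j (cs.tmulL k hk l m) (cs.ee k j hk hj y)
      = cs.tmulL j hj l (ctx.φ t k j m y)
  phi_itj : ∀ i j (hi : i ≠ t) (hj : j ≠ t) (m : M i t) (x : N) (l : L) (m' : M t j),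
    ctx'.φ i t j (cs.tmulN i hi m x) (cs.tmulL j hj l m')
      = cs.ee i j hi hj (ctx.φ i t j (op (mc.zeta x l) • m) m')
  phi_ikj : ∀ i k j (hi : i ≠ t) (hk : k ≠ t) (hj : j ≠ t) (z : M i k) (y : M k j),
    ctx'.φ i k j (cs.ee i k hi hk z) (cs.ee k j hk hj y)
      = cs.ee i j hi hj (ctx.φ i k j z y)

end Composition

section Excision

variable (t : Fin n) (S N L : Type u) [Ring S]
  [AddCommGroup N] [AddCommGroup L]
  [Module (A t) N] [Module Sᵐᵒᵖ N] [SMulCommClass (A t) Sᵐᵒᵖ N]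
  [Module S L] [Module ((A t)ᵐᵒᵖ) L] [SMulCommClass S ((A t)ᵐᵒᵖ) L]
  (A' : Fin n → Type u) (M' : Fin n → Fin n → Type u)
  [∀ i, Ring (A' i)] [∀ i j, AddCommGroup (M' i j)]
  [∀ i j, Module (A' i) (M' i j)] [∀ i j, Module ((A' j)ᵐᵒᵖ) (M' i j)]
  [∀ i j, SMulCommClass (A' i) ((A' j)ᵐᵒᵖ) (M' i j)]
  (NN : Fin n → Fin n → Type u) [∀ i j, AddCommGroup (NN i j)]
  (LL : Fin n → Fin n → Type u) [∀ i j, AddCommGroup (LL i j)]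

variable (A M)

/-- Data identifying the family `NN` with the column-excision: `NN i j = M i j`
for `j ≠ t` and `NN i t = M i t ⊗[R] N` (an abstract tensor product) for all `i`
(in particular `NN t t = (M t t) ⊗[R] N`, i.e. `R ⊗[R] N`). -/
structure ColExc where
  en : ∀ i j, j ≠ t → (M i j ≃+ NN i j)
  π : ∀ i, M i t → N → NN i t
  π_tensor : ∀ i,
    IsBTensor (A t) (fun (m : M i t) a => op a • m) (fun a (x : N) => a • x)
      (NN i t) (π i)

/-- Data identifying the family `LL` with the row-excision: `LL i j = M i j`
for `i ≠ t` and `LL t j = L ⊗[R] M t j` (an abstract tensor product) for all `j`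
(in particular `LL t t = L ⊗[R] (M t t)`, i.e. `L ⊗[R] R`). -/
structure RowExc where
  el : ∀ i j, i ≠ t → (M i j ≃+ LL i j)
  lp : ∀ j, L → M t j → LL t j
  lp_tensor : ∀ j,
    IsBTensor (A t) (fun (l : L) a => op a • l) (fun a (x : M t j) => a • x)
      (LL t j) (lp j)

/-- The component maps `β_ikj` of the left action of the generalised matrix ring
`[A_i; M_ij]` on the column-excision: `β_ikj = φ_ikj` for `j ≠ t` and
`β_ikt = φ_ikt ⊗ 1_N` for `j = t`, stated on pure tensors. -/
structure ColExcLeft (ctx : GenMoritaCtx n A M) (ce : ColExc A M t N NN)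
    (β : ∀ i k j, M i k → NN k j → NN i j) : Prop where
  add_left : ∀ i k j (x x' : M i k) (y : NN k j),
    β i k j (x + x') y = β i k j x y + β i k j x' y
  add_right : ∀ i k j (x : M i k) (y y' : NN k j),
    β i k j x (y + y') = β i k j x y + β i k j x y'
  spec_ne : ∀ i k j (hj : j ≠ t) (x : M i k) (y : M k j),
    β i k j x (ce.en k j hj y) = ce.en i j hj (ctx.φ i k j x y)
  spec_t : ∀ i k (z : M i k) (m : M k t) (x : N),
    β i k t z (ce.π k m x) = ce.π i (ctx.φ i k t z m) x

/-- The component maps `β'_ikj` of the right action of the generalised matrix ring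
`[A'_i; M'_ij]` of the composition on the column-excision, stated on pure tensors
through the identifications: `β'_ikj = φ'_ikj` for `i ≠ t`, and on row `t`:
`β'_ttt(r ⊗ n ⊗ s) = r ⊗ (n·s)`, `β'_ttj(r ⊗ n ⊗ l ⊗ m) = (r·ζ(n ⊗ l))·m` for
`j ≠ t`, `β'_tht = φ_tht ⊗ 1_N` for `h ≠ t` and `β'_thj = φ_thj` for `h, j ≠ t`. -/
structure ColExcRight (ctx : GenMoritaCtx n A M) (mc : MoritaCtx (A t) S N L)
    (cs : CompSetup A M t S N L A' M') (ce : ColExc A M t N NN)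
    (β' : ∀ i k j, NN i k → M' k j → NN i j) : Prop where
  add_left : ∀ i k j (x x' : NN i k) (y : M' k j),
    β' i k j (x + x') y = β' i k j x y + β' i k j x' y
  add_right : ∀ i k j (x : NN i k) (y y' : M' k j),
    β' i k j x (y + y') = β' i k j x y + β' i k j x y'
  spec₁ : ∀ i k j (hk : k ≠ t) (hj : j ≠ t) (x : M i k) (y : M k j),
    β' i k j (ce.en i k hk x) (cs.ee k j hk hj y) = ce.en i j hj (ctx.φ i k j x y)
  spec₂ : ∀ i k (hk : k ≠ t) (x : M i k) (m : M k t) (nn : N),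
    β' i k t (ce.en i k hk x) (cs.tmulN k hk m nn) = ce.π i (ctx.φ i k t x m) nn
  spec₃ : ∀ i j (hj : j ≠ t) (m : M i t) (nn : N) (l : L) (m' : M t j),
    β' i t j (ce.π i m nn) (cs.tmulL j hj l m')
      = ce.en i j hj (ctx.φ i t j (op (mc.zeta nn l) • m) m')
  spec₄ : ∀ i (m : M i t) (nn : N) (s : S),
    β' i t t (ce.π i m nn) (cs.uS s) = ce.π i m (op s • nn)

/-- The component maps `γ'_ikj` of the left action of `[A'_i; M'_ij]` on the
row-excision, stated on pure tensors through the identifications: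
`γ'_ikj = φ'_ikj` for `j ≠ t`, and on column `t`: `γ'_ttt(s ⊗ l ⊗ r) = (s·l) ⊗ r`,
`γ'_tkt = 1_L ⊗ φ_tkt` for `k ≠ t`, `γ'_itt(m ⊗ n ⊗ l ⊗ r) = m·(ζ(n ⊗ l)·r)` for
`i ≠ t` and `γ'_ikt = φ_ikt` for `i, k ≠ t`. -/
structure RowExcLeft (ctx : GenMoritaCtx n A M) (mc : MoritaCtx (A t) S N L)
    (cs : CompSetup A M t S N L A' M') (re : RowExc A M t L LL)
    (γ' : ∀ i k j, M' i k → LL k j → LL i j) : Prop where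
  add_left : ∀ i k j (x x' : M' i k) (y : LL k j),
    γ' i k j (x + x') y = γ' i k j x y + γ' i k j x' y
  add_right : ∀ i k j (x : M' i k) (y y' : LL k j),
    γ' i k j x (y + y') = γ' i k j x y + γ' i k j x y'
  spec₁ : ∀ i k j (hi : i ≠ t) (hk : k ≠ t) (x : M i k) (y : M k j),
    γ' i k j (cs.ee i k hi hk x) (re.el k j hk y) = re.el i j hi (ctx.φ i k j x y)
  spec₂ : ∀ k j (hk : k ≠ t) (l : L) (m : M t k) (y : M k j),
    γ' t k j (cs.tmulL k hk l m) (re.el k j hk y) = re.lp j l (ctx.φ t k j m y)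
  spec₃ : ∀ i j (hi : i ≠ t) (m : M i t) (nn : N) (l : L) (m' : M t j),
    γ' i t j (cs.tmulN i hi m nn) (re.lp j l m')
      = re.el i j hi (ctx.φ i t j (op (mc.zeta nn l) • m) m')
  spec₄ : ∀ j (s : S) (l : L) (m : M t j),
    γ' t t j (cs.uS s) (re.lp j l m) = re.lp j (s • l) m

/-- The component maps `γ_ikj` of the right action of `[A_i; M_ij]` on the
row-excision: `γ_ikj = φ_ikj` for `i ≠ t` and `γ_tkj = 1_L ⊗ φ_tkj` on row `t`,
stated on pure tensors. -/
structure RowExcRight (ctx : GenMoritaCtx n A M) (re : RowExc A M t L LL)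
    (γ : ∀ i k j, LL i k → M k j → LL i j) : Prop where
  add_left : ∀ i k j (x x' : LL i k) (y : M k j),
    γ i k j (x + x') y = γ i k j x y + γ i k j x' y
  add_right : ∀ i k j (x : LL i k) (y y' : M k j),
    γ i k j x (y + y') = γ i k j x y + γ i k j x y'
  spec_ne : ∀ i k j (hi : i ≠ t) (x : M i k) (y : M k j),
    γ i k j (re.el i k hi x) y = re.el i j hi (ctx.φ i k j x y)
  spec_t : ∀ k j (l : L) (m : M t k) (y : M k j),
    γ t k j (re.lp k l m) y = re.lp j l (ctx.φ t k j m y)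

/-- The component maps `α_ikj : N_ik ⊗ L_kj → M_ij` of the column-row ligation:
`α_ikj = φ_ikj` for `k ≠ t` and
`α_itj(m ⊗ n ⊗ l ⊗ m') = φ_itj((m·ζ(n ⊗ l)) ⊗ m')` for `k = t`,
stated on pure tensors. -/
structure ColRowLigation (ctx : GenMoritaCtx n A M) (mc : MoritaCtx (A t) S N L)
    (ce : ColExc A M t N NN) (re : RowExc A M t L LL)
    (α : ∀ i k j, NN i k → LL k j → M i j) : Prop where
  add_left : ∀ i k j (x x' : NN i k) (y : LL k j),
    α i k j (x + x') y = α i k j x y + α i k j x' y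
  add_right : ∀ i k j (x : NN i k) (y y' : LL k j),
    α i k j x (y + y') = α i k j x y + α i k j x y'
  spec_ne : ∀ i k j (hk : k ≠ t) (x : M i k) (y : M k j),
    α i k j (ce.en i k hk x) (re.el k j hk y) = ctx.φ i k j x y
  spec_t : ∀ i j (m : M i t) (nn : N) (l : L) (m' : M t j),
    α i t j (ce.π i m nn) (re.lp j l m') = ctx.φ i t j (op (mc.zeta nn l) • m) m'

/-- The component maps `α'_ikj : L_ik ⊗ N_kj → M'_ij` of the row-column ligation:
`α'_ikj = φ_ikj` for `i, j ≠ t`, `α'_ikt = φ_ikt ⊗ 1_N` for `i ≠ t = j`,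
`α'_tkj = 1_L ⊗ φ_tkj` for `i = t ≠ j` and
`α'_tkt(l ⊗ m ⊗ m' ⊗ n) = θ((l·φ_tkt(m ⊗ m')) ⊗ n)` for `i = t = j`,
stated on pure tensors through the identifications. -/
structure RowColLigation (ctx : GenMoritaCtx n A M) (mc : MoritaCtx (A t) S N L)
    (cs : CompSetup A M t S N L A' M') (ce : ColExc A M t N NN)
    (re : RowExc A M t L LL)
    (α' : ∀ i k j, LL i k → NN k j → M' i j) : Prop where
  add_left : ∀ i k j (x x' : LL i k) (y : NN k j),
    α' i k j (x + x') y = α' i k j x y + α' i k j x' y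
  add_right : ∀ i k j (x : LL i k) (y y' : NN k j),
    α' i k j x (y + y') = α' i k j x y + α' i k j x y'
  spec₁ : ∀ i k j (hi : i ≠ t) (hj : j ≠ t) (x : M i k) (y : M k j),
    α' i k j (re.el i k hi x) (ce.en k j hj y) = cs.ee i j hi hj (ctx.φ i k j x y)
  spec₂ : ∀ i k (hi : i ≠ t) (x : M i k) (m : M k t) (nn : N),
    α' i k t (re.el i k hi x) (ce.π k m nn) = cs.tmulN i hi (ctx.φ i k t x m) nn
  spec₃ : ∀ k j (hj : j ≠ t) (l : L) (m : M t k) (y : M k j),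
    α' t k j (re.lp k l m) (ce.en k j hj y) = cs.tmulL j hj l (ctx.φ t k j m y)
  spec₄ : ∀ k (l : L) (m : M t k) (m' : M k t) (nn : N),
    α' t k t (re.lp k l m) (ce.π k m' nn)
      = cs.uS (mc.theta (op ((ctx.δ t).symm (ctx.φ t k t m m')) • l) nn)

end Excision

namespace IsBTensor
variable {A : Type u} [Ring A] {M X : Type u} [AddCommGroup M] [AddCommGroup X]
  {ra : M → A → M} {la : A → X → X} {T : Type u} [AddCommGroup T] {τ : M → X → T}
  {Z : Type u} [AddCommGroup Z]

noncomputable def lh (ht : IsBTensor A ra la T τ) (g : M → X → Z)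
    (hg : IsBalancedMap A ra la g) : T →+ Z :=
  (ht.lift Z g hg).choose

lemma lh_spec (ht : IsBTensor A ra la T τ) (g : M → X → Z)
    (hg : IsBalancedMap A ra la g) (m : M) (x : X) :
    ht.lh g hg (τ m x) = g m x := (ht.lift Z g hg).choose_spec.1 m x

lemma homExt (ht : IsBTensor A ra la T τ) {f g : T →+ Z}
    (H : ∀ m x, f (τ m x) = g (τ m x)) : f = g := by
  obtain ⟨b1, b2, b3⟩ := ht.balanced
  have hbal : IsBalancedMap A ra la (fun m x => f (τ m x)) :=
    ⟨fun m m' x => by simp [b1], fun m x x' => by simp [b2], fun a m x => by simp [b3]⟩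
  obtain ⟨h, -, huniq⟩ := ht.lift Z _ hbal
  exact (huniq f (fun m x => rfl)).trans (huniq g (fun m x => (H m x).symm)).symm

lemma funExt (ht : IsBTensor A ra la T τ) {f g : T → Z}
    (hf : ∀ x y, f (x + y) = f x + f y) (hg : ∀ x y, g (x + y) = g x + g y)
    (H : ∀ m x, f (τ m x) = g (τ m x)) : f = g := by
  have := ht.homExt (f := AddMonoidHom.mk' f hf) (g := AddMonoidHom.mk' g hg) H
  exact funext fun z => congrArg (fun h : T →+ Z => h z) this

lemma funExt' (ht : IsBTensor A ra la T τ) {f g : T → Z}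
    (hf : ∀ x y, f (x + y) = f x + f y) (hg : ∀ x y, g (x + y) = g x + g y)
    (H : ∀ m x, f (τ m x) = g (τ m x)) (z : T) : f z = g z :=
  congrFun (ht.funExt hf hg H) z

end IsBTensor

lemma cast_self {α : Sort u} (h : α = α) (a : α) : cast h a = a := by
  rw [Subsingleton.elim h rfl]; rfl

lemma eq_zero_of_self_add {G : Type u} [AddCommGroup G] {a : G} (h : a = a + a) : a = 0 :=
  add_eq_left.mp h.symm
section MainAux
set_option linter.unusedSectionVars false
variable {n : ℕ} {A : Fin n → Type u} {M : Fin n → Fin n → Type u}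
    [∀ i, Ring (A i)] [∀ i j, AddCommGroup (M i j)]
    [∀ i j, Module (A i) (M i j)] [∀ i j, Module ((A j)ᵐᵒᵖ) (M i j)]
    [∀ i j, SMulCommClass (A i) ((A j)ᵐᵒᵖ) (M i j)]
    {t : Fin n} {S N L : Type u} [Ring S] [AddCommGroup N] [AddCommGroup L]
    [Module (A t) N] [Module Sᵐᵒᵖ N] [SMulCommClass (A t) Sᵐᵒᵖ N]
    [Module S L] [Module ((A t)ᵐᵒᵖ) L] [SMulCommClass S ((A t)ᵐᵒᵖ) L]
    {A' : Fin n → Type u} {M' : Fin n → Fin n → Type u}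
    [∀ i, Ring (A' i)] [∀ i j, AddCommGroup (M' i j)]
    [∀ i j, Module (A' i) (M' i j)] [∀ i j, Module ((A' j)ᵐᵒᵖ) (M' i j)]
    [∀ i j, SMulCommClass (A' i) ((A' j)ᵐᵒᵖ) (M' i j)]
    {NN : Fin n → Fin n → Type u} [∀ i j, AddCommGroup (NN i j)]

-- biadditivity/balance of the structure maps, unpacked
variable (ce : ColExc A M t N NN)

lemma pi_add₁ (i : Fin n) (m m' : M i t) (x : N) :
    ce.π i (m + m') x = ce.π i m x + ce.π i m' x := (ce.π_tensor i).balanced.1 m m' x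
lemma pi_add₂ (i : Fin n) (m : M i t) (x x' : N) :
    ce.π i m (x + x') = ce.π i m x + ce.π i m x' := (ce.π_tensor i).balanced.2.1 m x x'
lemma pi_bal (i : Fin n) (a : A t) (m : M i t) (x : N) :
    ce.π i (op a • m) x = ce.π i m (a • x) := (ce.π_tensor i).balanced.2.2 a m x

variable (ctx : GenMoritaCtx n A M)

/-- the left-action component `β_ikt = φ_ikt ⊗ 1_N`, as a hom. -/
noncomputable def betaT (i k : Fin n) (z : M i k) : NN k t →+ NN i t :=
  (ce.π_tensor k).lh (fun m x => ce.π i (ctx.φ i k t z m) x)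
    ⟨fun m m' x => by simp only [ctx.φ_add_right, pi_add₁],
     fun m x x' => by simp only [pi_add₂],
     fun a m x => by simp only [ctx.φ_smul_right, pi_bal]⟩

lemma betaT_pure (i k : Fin n) (z : M i k) (m : M k t) (x : N) :
    betaT ce ctx i k z (ce.π k m x) = ce.π i (ctx.φ i k t z m) x :=
  IsBTensor.lh_spec _ _ _ m x

/-- the left action components `β_ikj`. -/
noncomputable def mkβ : ∀ i k j, M i k → NN k j → NN i j := fun i k j z y =>
  if hj : j = t then
    cast (show NN i t = NN i j by rw [hj])
      (betaT ce ctx i k z (cast (show NN k j = NN k t by rw [hj]) y))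
  else ce.en i j hj (ctx.φ i k j z ((ce.en k j hj).symm y))

lemma mkβ_t (i k : Fin n) (z : M i k) (y : NN k t) :
    mkβ ce ctx i k t z y = betaT ce ctx i k z y := by
  simp only [mkβ, dif_pos, cast_self]

lemma mkβ_ne (i k j : Fin n) (hj : j ≠ t) (z : M i k) (y : NN k j) :
    mkβ ce ctx i k j z y = ce.en i j hj (ctx.φ i k j z ((ce.en k j hj).symm y)) := by
  simp only [mkβ, dif_neg hj]

lemma β_spec_ne (i k j : Fin n) (hj : j ≠ t) (x : M i k) (y : M k j) :
    mkβ ce ctx i k j x (ce.en k j hj y) = ce.en i j hj (ctx.φ i k j x y) := by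
  rw [mkβ_ne ce ctx i k j hj, AddEquiv.symm_apply_apply]

lemma β_spec_t (i k : Fin n) (z : M i k) (m : M k t) (x : N) :
    mkβ ce ctx i k t z (ce.π k m x) = ce.π i (ctx.φ i k t z m) x := by
  rw [mkβ_t, betaT_pure]

lemma β_add_right (i k j : Fin n) (z : M i k) (y y' : NN k j) :
    mkβ ce ctx i k j z (y + y') = mkβ ce ctx i k j z y + mkβ ce ctx i k j z y' := by
  rcases eq_or_ne j t with rfl | hj
  · simp only [mkβ_t]; exact map_add _ _ _
  · simp only [mkβ_ne ce ctx i k j hj, map_add, ctx.φ_add_right]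

lemma β_add_left (i k j : Fin n) (z z' : M i k) (y : NN k j) :
    mkβ ce ctx i k j (z + z') y = mkβ ce ctx i k j z y + mkβ ce ctx i k j z' y := by
  rcases eq_or_ne j t with rfl | hj
  · simp only [mkβ_t]
    have : betaT ce ctx i k (z + z') = betaT ce ctx i k z + betaT ce ctx i k z' := by
      apply (ce.π_tensor k).homExt
      intro m x
      simp [betaT_pure, ctx.φ_add_left, pi_add₁]
    rw [this]; rfl
  · simp only [mkβ_ne ce ctx i k j hj, map_add, ctx.φ_add_left]

lemma β_zero_left (i k j : Fin n) (y : NN k j) : mkβ ce ctx i k j 0 y = 0 :=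
  eq_zero_of_self_add (by rw [← β_add_left, add_zero])

lemma β_zero_right (i k j : Fin n) (z : M i k) : mkβ ce ctx i k j z 0 = 0 :=
  eq_zero_of_self_add (by rw [← β_add_right, add_zero])

lemma β_one (i j : Fin n) (y : NN i j) : mkβ ce ctx i i j (ctx.δ i 1) y = y := by
  rcases eq_or_ne j t with rfl | hj
  · refine (ce.π_tensor i).funExt' (f := fun y => mkβ ce ctx i i j (ctx.δ i 1) y) (g := id)
      (fun a b => β_add_right ce ctx i i j _ a b) (fun a b => rfl) ?_ y
    intro m x
    simp only [β_spec_t, ctx.φ_diag_left, one_smul, id]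
  · conv_lhs => rw [show y = ce.en i j hj ((ce.en i j hj).symm y) from (AddEquiv.apply_symm_apply _ _).symm]
    rw [β_spec_ne, ctx.φ_diag_left, one_smul, AddEquiv.apply_symm_apply]

lemma β_assoc (i k h j : Fin n) (z : M i k) (z' : M k h) (y : NN h j) :
    mkβ ce ctx i h j (ctx.φ i k h z z') y = mkβ ce ctx i k j z (mkβ ce ctx k h j z' y) := by
  rcases eq_or_ne j t with rfl | hj
  · refine (ce.π_tensor h).funExt'
      (f := fun y => mkβ ce ctx i h j (ctx.φ i k h z z') y)
      (g := fun y => mkβ ce ctx i k j z (mkβ ce ctx k h j z' y))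
      (fun a b => β_add_right ce ctx _ _ _ _ a b)
      (fun a b => by simp only [β_add_right]) ?_ y
    intro m x
    simp only [β_spec_t, ctx.φ_assoc]
  · conv_lhs => rw [show y = ce.en h j hj ((ce.en h j hj).symm y) from (AddEquiv.apply_symm_apply _ _).symm]
    conv_rhs => rw [show y = ce.en h j hj ((ce.en h j hj).symm y) from (AddEquiv.apply_symm_apply _ _).symm]
    rw [β_spec_ne, β_spec_ne, β_spec_ne, ctx.φ_assoc]

lemma β_sum_left (i k j : Fin n) {ι : Type} (s : Finset ι) (z : ι → M i k) (y : NN k j) :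
    mkβ ce ctx i k j (∑ a ∈ s, z a) y = ∑ a ∈ s, mkβ ce ctx i k j (z a) y := by
  classical
  induction s using Finset.induction with
  | empty => simp [β_zero_left]
  | insert _ _ hns ih => rw [Finset.sum_insert hns, Finset.sum_insert hns, β_add_left, ih]

lemma β_sum_right (i k j : Fin n) {ι : Type} (s : Finset ι) (z : M i k) (y : ι → NN k j) :
    mkβ ce ctx i k j z (∑ a ∈ s, y a) = ∑ a ∈ s, mkβ ce ctx i k j z (y a) := by
  classical
  induction s using Finset.induction with
  | empty => simp [β_zero_right]
  | insert _ _ hns ih => rw [Finset.sum_insert hns, Finset.sum_insert hns, β_add_right, ih]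

end MainAux
section MainAux
set_option linter.unusedSectionVars false
variable {n : ℕ} {A : Fin n → Type u} {M : Fin n → Fin n → Type u}
    [∀ i, Ring (A i)] [∀ i j, AddCommGroup (M i j)]
    [∀ i j, Module (A i) (M i j)] [∀ i j, Module ((A j)ᵐᵒᵖ) (M i j)]
    [∀ i j, SMulCommClass (A i) ((A j)ᵐᵒᵖ) (M i j)]
    {t : Fin n} {S N L : Type u} [Ring S] [AddCommGroup N] [AddCommGroup L]
    [Module (A t) N] [Module Sᵐᵒᵖ N] [SMulCommClass (A t) Sᵐᵒᵖ N]
    [Module S L] [Module ((A t)ᵐᵒᵖ) L] [SMulCommClass S ((A t)ᵐᵒᵖ) L]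
    {A' : Fin n → Type u} {M' : Fin n → Fin n → Type u}
    [∀ i, Ring (A' i)] [∀ i j, AddCommGroup (M' i j)]
    [∀ i j, Module (A' i) (M' i j)] [∀ i j, Module ((A' j)ᵐᵒᵖ) (M' i j)]
    [∀ i j, SMulCommClass (A' i) ((A' j)ᵐᵒᵖ) (M' i j)]
    {NN : Fin n → Fin n → Type u} [∀ i j, AddCommGroup (NN i j)]

-- biadditivity/balance of the structure maps, unpacked
variable (ce : ColExc A M t N NN) (ctx : GenMoritaCtx n A M)
    (mc : MoritaCtx (A t) S N L) (cs : CompSetup A M t S N L A' M')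

lemma tN_add₁ (i : Fin n) (hi : i ≠ t) (m m' : M i t) (x : N) :
    cs.tmulN i hi (m + m') x = cs.tmulN i hi m x + cs.tmulN i hi m' x :=
  (cs.tmulN_tensor i hi).balanced.1 m m' x
lemma tN_add₂ (i : Fin n) (hi : i ≠ t) (m : M i t) (x x' : N) :
    cs.tmulN i hi m (x + x') = cs.tmulN i hi m x + cs.tmulN i hi m x' :=
  (cs.tmulN_tensor i hi).balanced.2.1 m x x'
lemma tN_bal (i : Fin n) (hi : i ≠ t) (a : A t) (m : M i t) (x : N) :
    cs.tmulN i hi (op a • m) x = cs.tmulN i hi m (a • x) :=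
  (cs.tmulN_tensor i hi).balanced.2.2 a m x
lemma tL_add₁ (j : Fin n) (hj : j ≠ t) (l l' : L) (m : M t j) :
    cs.tmulL j hj (l + l') m = cs.tmulL j hj l m + cs.tmulL j hj l' m :=
  (cs.tmulL_tensor j hj).balanced.1 l l' m
lemma tL_add₂ (j : Fin n) (hj : j ≠ t) (l : L) (m m' : M t j) :
    cs.tmulL j hj l (m + m') = cs.tmulL j hj l m + cs.tmulL j hj l m' :=
  (cs.tmulL_tensor j hj).balanced.2.1 l m m'
lemma tL_bal (j : Fin n) (hj : j ≠ t) (a : A t) (l : L) (m : M t j) :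
    cs.tmulL j hj (op a • l) m = cs.tmulL j hj l (a • m) :=
  (cs.tmulL_tensor j hj).balanced.2.2 a l m

/-- `β'` component for `k ≠ t`, `j ≠ t`. -/
def betaP₁ (i k j : Fin n) (hk : k ≠ t) (hj : j ≠ t) (x : NN i k) (y : M' k j) : NN i j :=
  ce.en i j hj (ctx.φ i k j ((ce.en i k hk).symm x) ((cs.ee k j hk hj).symm y))

/-- `β'` component for `k ≠ t`, `j = t`. -/
noncomputable def betaP₂ (i k : Fin n) (hk : k ≠ t) (x : NN i k) : M' k t →+ NN i t :=
  (cs.tmulN_tensor k hk).lh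
    (fun m nn => ce.π i (ctx.φ i k t ((ce.en i k hk).symm x) m) nn)
    ⟨fun m m' nn => by simp only [ctx.φ_add_right, pi_add₁],
     fun m nn nn' => by simp only [pi_add₂],
     fun a m nn => by simp only [ctx.φ_smul_right, pi_bal]⟩

/-- inner lift for the `β'` component with `k = t`, `j ≠ t`. -/
noncomputable def betaP₃i (i j : Fin n) (hj : j ≠ t) (m : M i t) (nn : N) :
    M' t j →+ NN i j :=
  (cs.tmulL_tensor j hj).lh
    (fun l m' => ce.en i j hj (ctx.φ i t j (op (mc.zeta nn l) • m) m'))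
    ⟨fun l l' m' => by
        simp only [mc.zeta_add_right, op_add, add_smul, ctx.φ_add_left, map_add],
     fun l m' m'' => by simp only [ctx.φ_add_right, map_add],
     fun a l m' => by
        simp only []
        rw [mc.zeta_right, op_mul, mul_smul, ctx.φ_balanced]⟩

lemma betaP₃i_pure (i j : Fin n) (hj : j ≠ t) (m : M i t) (nn : N) (l : L) (m' : M t j) :
    betaP₃i ce ctx mc cs i j hj m nn (cs.tmulL j hj l m')
      = ce.en i j hj (ctx.φ i t j (op (mc.zeta nn l) • m) m') :=
  IsBTensor.lh_spec _ _ _ l m'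

/-- `β'` component for `k = t`, `j ≠ t`. -/
noncomputable def betaP₃ (i j : Fin n) (hj : j ≠ t) : NN i t →+ (M' t j →+ NN i j) :=
  (ce.π_tensor i).lh (fun m nn => betaP₃i ce ctx mc cs i j hj m nn)
    ⟨fun m m' nn => by
        refine (cs.tmulL_tensor j hj).homExt (fun l m'' => ?_)
        simp only [AddMonoidHom.add_apply, betaP₃i_pure, smul_add, ctx.φ_add_left, map_add],
     fun m nn nn' => by
        refine (cs.tmulL_tensor j hj).homExt (fun l m'' => ?_)
        simp only [AddMonoidHom.add_apply, betaP₃i_pure, mc.zeta_add_left, op_add,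
          add_smul, ctx.φ_add_left, map_add],
     fun a m nn => by
        refine (cs.tmulL_tensor j hj).homExt (fun l m'' => ?_)
        simp only [betaP₃i_pure, mc.zeta_left]
        rw [show (op (mc.zeta nn l) : (A t)ᵐᵒᵖ) • op a • m = op (a * mc.zeta nn l) • m by
          rw [← mul_smul, ← op_mul]]⟩

lemma betaP₃_pure (i j : Fin n) (hj : j ≠ t) (m : M i t) (nn : N) :
    betaP₃ ce ctx mc cs i j hj (ce.π i m nn) = betaP₃i ce ctx mc cs i j hj m nn :=
  IsBTensor.lh_spec _ _ _ m nn

/-- `β'` component for `k = t`, `j = t`. -/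
noncomputable def betaP₄ (i : Fin n) : NN i t →+ (M' t t →+ NN i t) :=
  (ce.π_tensor i).lh
    (fun m nn => AddMonoidHom.mk' (fun y => ce.π i m (op (cs.uS.symm y) • nn))
      (fun y y' => by simp only [map_add, op_add, add_smul, pi_add₂]))
    ⟨fun m m' nn => by
        refine AddMonoidHom.ext (fun y => ?_)
        simp only [AddMonoidHom.add_apply, AddMonoidHom.mk'_apply, pi_add₁],
     fun m nn nn' => by
        refine AddMonoidHom.ext (fun y => ?_)
        simp only [AddMonoidHom.add_apply, AddMonoidHom.mk'_apply, smul_add, pi_add₂],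
     fun a m nn => by
        refine AddMonoidHom.ext (fun y => ?_)
        simp only [AddMonoidHom.mk'_apply, pi_bal, smul_comm]⟩

lemma betaP₄_pure (i : Fin n) (m : M i t) (nn : N) (y : M' t t) :
    betaP₄ ce cs i (ce.π i m nn) y = ce.π i m (op (cs.uS.symm y) • nn) :=
  congrArg (fun h : M' t t →+ NN i t => h y) (IsBTensor.lh_spec _ _ _ m nn)

/-- the right action components `β'_ikj`. -/
noncomputable def mkβ' : ∀ i k j, NN i k → M' k j → NN i j := fun i k j x y =>
  if hk : k = t then
    if hj : j = t then
      cast (show NN i t = NN i j by rw [hj])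
        (betaP₄ ce cs i (cast (show NN i k = NN i t by rw [hk]) x)
          (cast (show M' k j = M' t t by rw [hk, hj]) y))
    else
      betaP₃ ce ctx mc cs i j hj (cast (show NN i k = NN i t by rw [hk]) x)
        (cast (show M' k j = M' t j by rw [hk]) y)
  else
    if hj : j = t then
      cast (show NN i t = NN i j by rw [hj])
        (betaP₂ ce ctx cs i k hk x (cast (show M' k j = M' k t by rw [hj]) y))
    else betaP₁ ce ctx cs i k j hk hj x y

lemma mkβ'_tt (i : Fin n) (x : NN i t) (y : M' t t) :
    mkβ' ce ctx mc cs i t t x y = betaP₄ ce cs i x y := by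
  simp only [mkβ', dif_pos, cast_self]

lemma mkβ'_tn (i j : Fin n) (hj : j ≠ t) (x : NN i t) (y : M' t j) :
    mkβ' ce ctx mc cs i t j x y = betaP₃ ce ctx mc cs i j hj x y := by
  simp only [mkβ', dif_pos, dif_neg hj, cast_self]

lemma mkβ'_nt (i k : Fin n) (hk : k ≠ t) (x : NN i k) (y : M' k t) :
    mkβ' ce ctx mc cs i k t x y = betaP₂ ce ctx cs i k hk x y := by
  simp only [mkβ', dif_neg hk, dif_pos, cast_self]

lemma mkβ'_nn (i k j : Fin n) (hk : k ≠ t) (hj : j ≠ t) (x : NN i k) (y : M' k j) :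
    mkβ' ce ctx mc cs i k j x y = betaP₁ ce ctx cs i k j hk hj x y := by
  simp only [mkβ', dif_neg hk, dif_neg hj]

end MainAux
section MainAux
set_option linter.unusedSectionVars false
variable {n : ℕ} {A : Fin n → Type u} {M : Fin n → Fin n → Type u}
    [∀ i, Ring (A i)] [∀ i j, AddCommGroup (M i j)]
    [∀ i j, Module (A i) (M i j)] [∀ i j, Module ((A j)ᵐᵒᵖ) (M i j)]
    [∀ i j, SMulCommClass (A i) ((A j)ᵐᵒᵖ) (M i j)]
    {t : Fin n} {S N L : Type u} [Ring S] [AddCommGroup N] [AddCommGroup L]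
    [Module (A t) N] [Module Sᵐᵒᵖ N] [SMulCommClass (A t) Sᵐᵒᵖ N]
    [Module S L] [Module ((A t)ᵐᵒᵖ) L] [SMulCommClass S ((A t)ᵐᵒᵖ) L]
    {A' : Fin n → Type u} {M' : Fin n → Fin n → Type u}
    [∀ i, Ring (A' i)] [∀ i j, AddCommGroup (M' i j)]
    [∀ i j, Module (A' i) (M' i j)] [∀ i j, Module ((A' j)ᵐᵒᵖ) (M' i j)]
    [∀ i j, SMulCommClass (A' i) ((A' j)ᵐᵒᵖ) (M' i j)]
    {NN : Fin n → Fin n → Type u} [∀ i j, AddCommGroup (NN i j)]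

-- biadditivity/balance of the structure maps, unpacked
variable (ce : ColExc A M t N NN) (ctx : GenMoritaCtx n A M)
    (mc : MoritaCtx (A t) S N L) (cs : CompSetup A M t S N L A' M')

lemma betaP₂_pure (i k : Fin n) (hk : k ≠ t) (x : NN i k) (m : M k t) (nn : N) :
    betaP₂ ce ctx cs i k hk x (cs.tmulN k hk m nn)
      = ce.π i (ctx.φ i k t ((ce.en i k hk).symm x) m) nn :=
  IsBTensor.lh_spec _ _ _ m nn

lemma β'_spec₁ (i k j : Fin n) (hk : k ≠ t) (hj : j ≠ t) (x : M i k) (y : M k j) :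
    mkβ' ce ctx mc cs i k j (ce.en i k hk x) (cs.ee k j hk hj y)
      = ce.en i j hj (ctx.φ i k j x y) := by
  rw [mkβ'_nn ce ctx mc cs i k j hk hj]
  simp [betaP₁]

lemma β'_spec₂ (i k : Fin n) (hk : k ≠ t) (x : M i k) (m : M k t) (nn : N) :
    mkβ' ce ctx mc cs i k t (ce.en i k hk x) (cs.tmulN k hk m nn)
      = ce.π i (ctx.φ i k t x m) nn := by
  rw [mkβ'_nt ce ctx mc cs i k hk, betaP₂_pure, AddEquiv.symm_apply_apply]

lemma β'_spec₃ (i j : Fin n) (hj : j ≠ t) (m : M i t) (nn : N) (l : L) (m' : M t j) :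
    mkβ' ce ctx mc cs i t j (ce.π i m nn) (cs.tmulL j hj l m')
      = ce.en i j hj (ctx.φ i t j (op (mc.zeta nn l) • m) m') := by
  rw [mkβ'_tn ce ctx mc cs i j hj, betaP₃_pure, betaP₃i_pure]

lemma β'_spec₄ (i : Fin n) (m : M i t) (nn : N) (s : S) :
    mkβ' ce ctx mc cs i t t (ce.π i m nn) (cs.uS s) = ce.π i m (op s • nn) := by
  rw [mkβ'_tt, betaP₄_pure, AddEquiv.symm_apply_apply]

lemma β'_add_right (i k j : Fin n) (x : NN i k) (y y' : M' k j) :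
    mkβ' ce ctx mc cs i k j x (y + y')
      = mkβ' ce ctx mc cs i k j x y + mkβ' ce ctx mc cs i k j x y' := by
  rcases eq_or_ne k t with rfl | hk
  · rcases eq_or_ne j k with rfl | hj
    · simp only [mkβ'_tt, map_add]
    · simp only [mkβ'_tn ce ctx mc cs i j hj, map_add]
  · rcases eq_or_ne j t with rfl | hj
    · simp only [mkβ'_nt ce ctx mc cs i k hk, map_add]
    · simp only [mkβ'_nn ce ctx mc cs i k j hk hj, betaP₁, map_add, ctx.φ_add_right]

lemma β'_add_left (i k j : Fin n) (x x' : NN i k) (y : M' k j) :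
    mkβ' ce ctx mc cs i k j (x + x') y
      = mkβ' ce ctx mc cs i k j x y + mkβ' ce ctx mc cs i k j x' y := by
  rcases eq_or_ne k t with rfl | hk
  · rcases eq_or_ne j k with rfl | hj
    · simp only [mkβ'_tt, map_add, AddMonoidHom.add_apply]
    · simp only [mkβ'_tn ce ctx mc cs i j hj, map_add, AddMonoidHom.add_apply]
  · rcases eq_or_ne j t with rfl | hj
    · simp only [mkβ'_nt ce ctx mc cs i k hk]
      have : betaP₂ ce ctx cs i k hk (x + x')
          = betaP₂ ce ctx cs i k hk x + betaP₂ ce ctx cs i k hk x' := by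
        refine (cs.tmulN_tensor k hk).homExt (fun m nn => ?_)
        simp only [betaP₂_pure, AddMonoidHom.add_apply, map_add, ctx.φ_add_left, pi_add₁]
      rw [this]; rfl
    · simp only [mkβ'_nn ce ctx mc cs i k j hk hj, betaP₁, map_add, ctx.φ_add_left]

lemma β'_zero_left (i k j : Fin n) (y : M' k j) : mkβ' ce ctx mc cs i k j 0 y = 0 :=
  eq_zero_of_self_add (by rw [← β'_add_left, add_zero])

lemma β'_zero_right (i k j : Fin n) (x : NN i k) : mkβ' ce ctx mc cs i k j x 0 = 0 :=
  eq_zero_of_self_add (by rw [← β'_add_right, add_zero])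

lemma β'_sum_left (i k j : Fin n) {ι : Type} (s : Finset ι) (x : ι → NN i k) (y : M' k j) :
    mkβ' ce ctx mc cs i k j (∑ a ∈ s, x a) y = ∑ a ∈ s, mkβ' ce ctx mc cs i k j (x a) y := by
  classical
  induction s using Finset.induction with
  | empty => simp [β'_zero_left]
  | insert _ _ hns ih => rw [Finset.sum_insert hns, Finset.sum_insert hns, β'_add_left, ih]

lemma β'_sum_right (i k j : Fin n) {ι : Type} (s : Finset ι) (x : NN i k) (y : ι → M' k j) :
    mkβ' ce ctx mc cs i k j x (∑ a ∈ s, y a) = ∑ a ∈ s, mkβ' ce ctx mc cs i k j x (y a) := by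
  classical
  induction s using Finset.induction with
  | empty => simp [β'_zero_right]
  | insert _ _ hns ih => rw [Finset.sum_insert hns, Finset.sum_insert hns, β'_add_right, ih]

variable (ctx' : GenMoritaCtx n A' M')

lemma β'_one (hcomp : IsComposition A M t S N L A' M' ctx mc cs ctx')
    (i j : Fin n) (x : NN i j) : mkβ' ce ctx mc cs i j j x (ctx'.δ j 1) = x := by
  rcases eq_or_ne j t with rfl | hj
  · rw [hcomp.delta_t_spec, map_one]
    refine (ce.π_tensor i).funExt'
      (f := fun x => mkβ' ce ctx mc cs i j j x (cs.uS 1)) (g := id)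
      (fun a b => β'_add_left ce ctx mc cs i j j a b _) (fun a b => rfl) ?_ x
    intro m nn
    simp only [β'_spec₄, op_one, one_smul, id]
  · rw [hcomp.delta_spec j hj, map_one]
    obtain ⟨xv, rfl⟩ : ∃ v, ce.en i j hj v = x := ⟨_, AddEquiv.apply_symm_apply _ _⟩
    rw [β'_spec₁ ce ctx mc cs i j j hj hj, ctx.φ_diag_right, op_one, one_smul]
end MainAux
section MainAux
set_option linter.unusedSectionVars false
variable {n : ℕ} {A : Fin n → Type u} {M : Fin n → Fin n → Type u}
    [∀ i, Ring (A i)] [∀ i j, AddCommGroup (M i j)]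
    [∀ i j, Module (A i) (M i j)] [∀ i j, Module ((A j)ᵐᵒᵖ) (M i j)]
    [∀ i j, SMulCommClass (A i) ((A j)ᵐᵒᵖ) (M i j)]
    {t : Fin n} {S N L : Type u} [Ring S] [AddCommGroup N] [AddCommGroup L]
    [Module (A t) N] [Module Sᵐᵒᵖ N] [SMulCommClass (A t) Sᵐᵒᵖ N]
    [Module S L] [Module ((A t)ᵐᵒᵖ) L] [SMulCommClass S ((A t)ᵐᵒᵖ) L]
    {A' : Fin n → Type u} {M' : Fin n → Fin n → Type u}
    [∀ i, Ring (A' i)] [∀ i j, AddCommGroup (M' i j)]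
    [∀ i j, Module (A' i) (M' i j)] [∀ i j, Module ((A' j)ᵐᵒᵖ) (M' i j)]
    [∀ i j, SMulCommClass (A' i) ((A' j)ᵐᵒᵖ) (M' i j)]
    {NN : Fin n → Fin n → Type u} [∀ i j, AddCommGroup (NN i j)]

-- biadditivity/balance of the structure maps, unpacked
variable (ce : ColExc A M t N NN) (ctx : GenMoritaCtx n A M)
    (mc : MoritaCtx (A t) S N L) (cs : CompSetup A M t S N L A' M')
    (ctx' : GenMoritaCtx n A' M')

section Assoc
variable (hcomp : IsComposition A M t S N L A' M' ctx mc cs ctx')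
include hcomp

lemma as_nnn (i k h j : Fin n) (hk : k ≠ t) (hh : h ≠ t) (hj : j ≠ t)
    (x : NN i k) (y' : M' k h) (z' : M' h j) :
    mkβ' ce ctx mc cs i h j (mkβ' ce ctx mc cs i k h x y') z'
      = mkβ' ce ctx mc cs i k j x (ctx'.φ k h j y' z') := by
  obtain ⟨xv, rfl⟩ : ∃ v, ce.en i k hk v = x := ⟨_, AddEquiv.apply_symm_apply _ _⟩
  obtain ⟨yv, rfl⟩ : ∃ v, cs.ee k h hk hh v = y' := ⟨_, AddEquiv.apply_symm_apply _ _⟩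
  obtain ⟨zv, rfl⟩ : ∃ v, cs.ee h j hh hj v = z' := ⟨_, AddEquiv.apply_symm_apply _ _⟩
  rw [β'_spec₁ ce ctx mc cs i k h hk hh, hcomp.phi_ikj k h j hk hh hj,
    β'_spec₁ ce ctx mc cs i h j hh hj, β'_spec₁ ce ctx mc cs i k j hk hj, ctx.φ_assoc]

lemma as_nnt (i k h : Fin n) (hk : k ≠ t) (hh : h ≠ t)
    (x : NN i k) (y' : M' k h) (z' : M' h t) :
    mkβ' ce ctx mc cs i h t (mkβ' ce ctx mc cs i k h x y') z'
      = mkβ' ce ctx mc cs i k t x (ctx'.φ k h t y' z') := by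
  obtain ⟨xv, rfl⟩ : ∃ v, ce.en i k hk v = x := ⟨_, AddEquiv.apply_symm_apply _ _⟩
  obtain ⟨yv, rfl⟩ : ∃ v, cs.ee k h hk hh v = y' := ⟨_, AddEquiv.apply_symm_apply _ _⟩
  refine (cs.tmulN_tensor h hh).funExt'
    (f := fun z' => mkβ' ce ctx mc cs i h t
      (mkβ' ce ctx mc cs i k h (ce.en i k hk xv) (cs.ee k h hk hh yv)) z')
    (g := fun z' => mkβ' ce ctx mc cs i k t (ce.en i k hk xv)
      (ctx'.φ k h t (cs.ee k h hk hh yv) z'))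
    (fun a b => β'_add_right ce ctx mc cs i h t _ a b)
    (fun a b => by simp only [ctx'.φ_add_right, β'_add_right]) ?_ z'
  intro m nn
  simp only [β'_spec₁ ce ctx mc cs i k h hk hh, hcomp.phi_ikt k h hk hh,
    β'_spec₂ ce ctx mc cs i h hh, β'_spec₂ ce ctx mc cs i k hk, ctx.φ_assoc]

lemma as_ntn (i k j : Fin n) (hk : k ≠ t) (hj : j ≠ t)
    (x : NN i k) (y' : M' k t) (z' : M' t j) :
    mkβ' ce ctx mc cs i t j (mkβ' ce ctx mc cs i k t x y') z'
      = mkβ' ce ctx mc cs i k j x (ctx'.φ k t j y' z') := by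
  obtain ⟨xv, rfl⟩ : ∃ v, ce.en i k hk v = x := ⟨_, AddEquiv.apply_symm_apply _ _⟩
  refine (cs.tmulN_tensor k hk).funExt'
    (f := fun y' => mkβ' ce ctx mc cs i t j (mkβ' ce ctx mc cs i k t (ce.en i k hk xv) y') z')
    (g := fun y' => mkβ' ce ctx mc cs i k j (ce.en i k hk xv) (ctx'.φ k t j y' z'))
    (fun a b => by simp only [β'_add_right, β'_add_left])
    (fun a b => by simp only [ctx'.φ_add_left, β'_add_right]) ?_ y'
  intro m nn
  refine (cs.tmulL_tensor j hj).funExt'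
    (f := fun z' => mkβ' ce ctx mc cs i t j
      (mkβ' ce ctx mc cs i k t (ce.en i k hk xv) (cs.tmulN k hk m nn)) z')
    (g := fun z' => mkβ' ce ctx mc cs i k j (ce.en i k hk xv)
      (ctx'.φ k t j (cs.tmulN k hk m nn) z'))
    (fun a b => β'_add_right ce ctx mc cs i t j _ a b)
    (fun a b => by simp only [ctx'.φ_add_right, β'_add_right]) ?_ z'
  intro l m'
  beta_reduce
  simp only [β'_spec₂ ce ctx mc cs i k hk, hcomp.phi_itj k j hk hj,
    β'_spec₃ ce ctx mc cs i j hj, β'_spec₁ ce ctx mc cs i k j hk hj]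
  rw [← ctx.φ_smul_right, ctx.φ_assoc]

lemma as_ntt (i k : Fin n) (hk : k ≠ t)
    (x : NN i k) (y' : M' k t) (z' : M' t t) :
    mkβ' ce ctx mc cs i t t (mkβ' ce ctx mc cs i k t x y') z'
      = mkβ' ce ctx mc cs i k t x (ctx'.φ k t t y' z') := by
  obtain ⟨xv, rfl⟩ : ∃ v, ce.en i k hk v = x := ⟨_, AddEquiv.apply_symm_apply _ _⟩
  obtain ⟨s, rfl⟩ : ∃ v, cs.uS v = z' := ⟨_, AddEquiv.apply_symm_apply _ _⟩
  refine (cs.tmulN_tensor k hk).funExt'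
    (f := fun y' => mkβ' ce ctx mc cs i t t
      (mkβ' ce ctx mc cs i k t (ce.en i k hk xv) y') (cs.uS s))
    (g := fun y' => mkβ' ce ctx mc cs i k t (ce.en i k hk xv)
      (ctx'.φ k t t y' (cs.uS s)))
    (fun a b => by simp only [β'_add_right, β'_add_left])
    (fun a b => by simp only [ctx'.φ_add_left, β'_add_right]) ?_ y'
  intro m nn
  simp only [β'_spec₂ ce ctx mc cs i k hk, hcomp.phi_itt k hk,
    β'_spec₄ ce ctx mc cs i]

lemma as_tnn (i h j : Fin n) (hh : h ≠ t) (hj : j ≠ t)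
    (x : NN i t) (y' : M' t h) (z' : M' h j) :
    mkβ' ce ctx mc cs i h j (mkβ' ce ctx mc cs i t h x y') z'
      = mkβ' ce ctx mc cs i t j x (ctx'.φ t h j y' z') := by
  obtain ⟨zv, rfl⟩ : ∃ v, cs.ee h j hh hj v = z' := ⟨_, AddEquiv.apply_symm_apply _ _⟩
  refine (ce.π_tensor i).funExt'
    (f := fun x => mkβ' ce ctx mc cs i h j (mkβ' ce ctx mc cs i t h x y') (cs.ee h j hh hj zv))
    (g := fun x => mkβ' ce ctx mc cs i t j x (ctx'.φ t h j y' (cs.ee h j hh hj zv)))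
    (fun a b => by simp only [β'_add_left])
    (fun a b => by simp only [β'_add_left]) ?_ x
  intro m nn
  refine (cs.tmulL_tensor h hh).funExt'
    (f := fun y' => mkβ' ce ctx mc cs i h j
      (mkβ' ce ctx mc cs i t h (ce.π i m nn) y') (cs.ee h j hh hj zv))
    (g := fun y' => mkβ' ce ctx mc cs i t j (ce.π i m nn)
      (ctx'.φ t h j y' (cs.ee h j hh hj zv)))
    (fun a b => by simp only [β'_add_right, β'_add_left])
    (fun a b => by simp only [ctx'.φ_add_left, β'_add_right]) ?_ y'
  intro l v
  simp only [β'_spec₃ ce ctx mc cs i h hh, hcomp.phi_tkj h j hh hj,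
    β'_spec₁ ce ctx mc cs i h j hh hj, β'_spec₃ ce ctx mc cs i j hj, ctx.φ_assoc]

lemma as_tnt (i h : Fin n) (hh : h ≠ t)
    (x : NN i t) (y' : M' t h) (z' : M' h t) :
    mkβ' ce ctx mc cs i h t (mkβ' ce ctx mc cs i t h x y') z'
      = mkβ' ce ctx mc cs i t t x (ctx'.φ t h t y' z') := by
  refine (ce.π_tensor i).funExt'
    (f := fun x => mkβ' ce ctx mc cs i h t (mkβ' ce ctx mc cs i t h x y') z')
    (g := fun x => mkβ' ce ctx mc cs i t t x (ctx'.φ t h t y' z'))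
    (fun a b => by simp only [β'_add_left])
    (fun a b => by simp only [β'_add_left]) ?_ x
  intro m nn
  refine (cs.tmulL_tensor h hh).funExt'
    (f := fun y' => mkβ' ce ctx mc cs i h t (mkβ' ce ctx mc cs i t h (ce.π i m nn) y') z')
    (g := fun y' => mkβ' ce ctx mc cs i t t (ce.π i m nn) (ctx'.φ t h t y' z'))
    (fun a b => by simp only [β'_add_right, β'_add_left])
    (fun a b => by simp only [ctx'.φ_add_left, β'_add_right]) ?_ y'
  intro l v
  refine (cs.tmulN_tensor h hh).funExt'
    (f := fun z' => mkβ' ce ctx mc cs i h t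
      (mkβ' ce ctx mc cs i t h (ce.π i m nn) (cs.tmulL h hh l v)) z')
    (g := fun z' => mkβ' ce ctx mc cs i t t (ce.π i m nn)
      (ctx'.φ t h t (cs.tmulL h hh l v) z'))
    (fun a b => β'_add_right ce ctx mc cs i h t _ a b)
    (fun a b => by simp only [ctx'.φ_add_right, β'_add_right]) ?_ z'
  intro m' nn'
  beta_reduce
  rw [β'_spec₃ ce ctx mc cs i h hh, β'_spec₂ ce ctx mc cs i h hh,
    hcomp.phi_tkt h hh, β'_spec₄ ce ctx mc cs i, ← ctx.φ_assoc,
    show ctx.φ t h t v m' = ctx.δ t ((ctx.δ t).symm (ctx.φ t h t v m')) from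
      (AddEquiv.apply_symm_apply _ _).symm, ctx.φ_diag_right, ← mul_smul, ← op_mul,
    pi_bal, mul_smul, mc.assoc_left, ← mc.theta_balanced, AddEquiv.symm_apply_apply]

lemma as_ttn (i j : Fin n) (hj : j ≠ t)
    (x : NN i t) (y' : M' t t) (z' : M' t j) :
    mkβ' ce ctx mc cs i t j (mkβ' ce ctx mc cs i t t x y') z'
      = mkβ' ce ctx mc cs i t j x (ctx'.φ t t j y' z') := by
  obtain ⟨s, rfl⟩ : ∃ v, cs.uS v = y' := ⟨_, AddEquiv.apply_symm_apply _ _⟩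
  refine (ce.π_tensor i).funExt'
    (f := fun x => mkβ' ce ctx mc cs i t j (mkβ' ce ctx mc cs i t t x (cs.uS s)) z')
    (g := fun x => mkβ' ce ctx mc cs i t j x (ctx'.φ t t j (cs.uS s) z'))
    (fun a b => by simp only [β'_add_left])
    (fun a b => by simp only [β'_add_left]) ?_ x
  intro m nn
  refine (cs.tmulL_tensor j hj).funExt'
    (f := fun z' => mkβ' ce ctx mc cs i t j
      (mkβ' ce ctx mc cs i t t (ce.π i m nn) (cs.uS s)) z')
    (g := fun z' => mkβ' ce ctx mc cs i t j (ce.π i m nn)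
      (ctx'.φ t t j (cs.uS s) z'))
    (fun a b => β'_add_right ce ctx mc cs i t j _ a b)
    (fun a b => by simp only [ctx'.φ_add_right, β'_add_right]) ?_ z'
  intro l m'
  beta_reduce
  rw [β'_spec₄ ce ctx mc cs i, β'_spec₃ ce ctx mc cs i j hj,
    hcomp.phi_ttj j hj, β'_spec₃ ce ctx mc cs i j hj, mc.zeta_balanced]

lemma as_ttt (i : Fin n) (x : NN i t) (y' : M' t t) (z' : M' t t) :
    mkβ' ce ctx mc cs i t t (mkβ' ce ctx mc cs i t t x y') z'
      = mkβ' ce ctx mc cs i t t x (ctx'.φ t t t y' z') := by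
  obtain ⟨s, rfl⟩ : ∃ v, cs.uS v = y' := ⟨_, AddEquiv.apply_symm_apply _ _⟩
  obtain ⟨s', rfl⟩ : ∃ v, cs.uS v = z' := ⟨_, AddEquiv.apply_symm_apply _ _⟩
  refine (ce.π_tensor i).funExt'
    (f := fun x => mkβ' ce ctx mc cs i t t (mkβ' ce ctx mc cs i t t x (cs.uS s)) (cs.uS s'))
    (g := fun x => mkβ' ce ctx mc cs i t t x (ctx'.φ t t t (cs.uS s) (cs.uS s')))
    (fun a b => by simp only [β'_add_left])
    (fun a b => by simp only [β'_add_left]) ?_ x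
  intro m nn
  beta_reduce
  rw [β'_spec₄ ce ctx mc cs i, β'_spec₄ ce ctx mc cs i, hcomp.phi_ttt,
    β'_spec₄ ce ctx mc cs i, ← mul_smul, ← op_mul]

lemma β'_assoc (i k h j : Fin n) (x : NN i k) (y' : M' k h) (z' : M' h j) :
    mkβ' ce ctx mc cs i h j (mkβ' ce ctx mc cs i k h x y') z'
      = mkβ' ce ctx mc cs i k j x (ctx'.φ k h j y' z') := by
  rcases eq_or_ne k t with rfl | hk
  · rcases eq_or_ne h k with rfl | hh
    · rcases eq_or_ne j h with rfl | hj
      · exact as_ttt ce ctx mc cs ctx' hcomp i x y' z'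
      · exact as_ttn ce ctx mc cs ctx' hcomp i j hj x y' z'
    · rcases eq_or_ne j k with rfl | hj
      · exact as_tnt ce ctx mc cs ctx' hcomp i h hh x y' z'
      · exact as_tnn ce ctx mc cs ctx' hcomp i h j hh hj x y' z'
  · rcases eq_or_ne h t with rfl | hh
    · rcases eq_or_ne j h with rfl | hj
      · exact as_ntt ce ctx mc cs ctx' hcomp i k hk x y' z'
      · exact as_ntn ce ctx mc cs ctx' hcomp i k j hk hj x y' z'
    · rcases eq_or_ne j t with rfl | hj
      · exact as_nnt ce ctx mc cs ctx' hcomp i k h hk hh x y' z'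
      · exact as_nnn ce ctx mc cs ctx' hcomp i k h j hk hh hj x y' z'

end Assoc

section Comm

lemma com_nn (i k h j : Fin n) (hh : h ≠ t) (hj : j ≠ t)
    (z : M i k) (w : NN k h) (y' : M' h j) :
    mkβ ce ctx i k j z (mkβ' ce ctx mc cs k h j w y')
      = mkβ' ce ctx mc cs i h j (mkβ ce ctx i k h z w) y' := by
  obtain ⟨wv, rfl⟩ : ∃ v, ce.en k h hh v = w := ⟨_, AddEquiv.apply_symm_apply _ _⟩
  obtain ⟨yv, rfl⟩ : ∃ v, cs.ee h j hh hj v = y' := ⟨_, AddEquiv.apply_symm_apply _ _⟩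
  rw [β'_spec₁ ce ctx mc cs k h j hh hj, β_spec_ne ce ctx i k j hj,
    β_spec_ne ce ctx i k h hh, β'_spec₁ ce ctx mc cs i h j hh hj, ctx.φ_assoc]

lemma com_nt (i k h : Fin n) (hh : h ≠ t)
    (z : M i k) (w : NN k h) (y' : M' h t) :
    mkβ ce ctx i k t z (mkβ' ce ctx mc cs k h t w y')
      = mkβ' ce ctx mc cs i h t (mkβ ce ctx i k h z w) y' := by
  obtain ⟨wv, rfl⟩ : ∃ v, ce.en k h hh v = w := ⟨_, AddEquiv.apply_symm_apply _ _⟩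
  refine (cs.tmulN_tensor h hh).funExt'
    (f := fun y' => mkβ ce ctx i k t z (mkβ' ce ctx mc cs k h t (ce.en k h hh wv) y'))
    (g := fun y' => mkβ' ce ctx mc cs i h t (mkβ ce ctx i k h z (ce.en k h hh wv)) y')
    (fun a b => by simp only [β'_add_right, β_add_right])
    (fun a b => by simp only [β'_add_right]) ?_ y'
  intro m nn
  simp only [β'_spec₂ ce ctx mc cs k h hh, β_spec_t ce ctx,
    β_spec_ne ce ctx i k h hh, β'_spec₂ ce ctx mc cs i h hh, ctx.φ_assoc]

lemma com_tn (i k j : Fin n) (hj : j ≠ t)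
    (z : M i k) (w : NN k t) (y' : M' t j) :
    mkβ ce ctx i k j z (mkβ' ce ctx mc cs k t j w y')
      = mkβ' ce ctx mc cs i t j (mkβ ce ctx i k t z w) y' := by
  refine (ce.π_tensor k).funExt'
    (f := fun w => mkβ ce ctx i k j z (mkβ' ce ctx mc cs k t j w y'))
    (g := fun w => mkβ' ce ctx mc cs i t j (mkβ ce ctx i k t z w) y')
    (fun a b => by simp only [β'_add_left, β_add_right])
    (fun a b => by simp only [β_add_right, β'_add_left]) ?_ w
  intro m nn
  refine (cs.tmulL_tensor j hj).funExt'
    (f := fun y' => mkβ ce ctx i k j z (mkβ' ce ctx mc cs k t j (ce.π k m nn) y'))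
    (g := fun y' => mkβ' ce ctx mc cs i t j (mkβ ce ctx i k t z (ce.π k m nn)) y')
    (fun a b => by simp only [β'_add_right, β_add_right])
    (fun a b => by simp only [β'_add_right]) ?_ y'
  intro l m'
  beta_reduce
  rw [β'_spec₃ ce ctx mc cs k j hj, β_spec_ne ce ctx i k j hj, β_spec_t ce ctx,
    β'_spec₃ ce ctx mc cs i j hj, ← ctx.φ_smul_right, ctx.φ_assoc]

lemma com_tt (i k : Fin n)
    (z : M i k) (w : NN k t) (y' : M' t t) :
    mkβ ce ctx i k t z (mkβ' ce ctx mc cs k t t w y')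
      = mkβ' ce ctx mc cs i t t (mkβ ce ctx i k t z w) y' := by
  obtain ⟨s, rfl⟩ : ∃ v, cs.uS v = y' := ⟨_, AddEquiv.apply_symm_apply _ _⟩
  refine (ce.π_tensor k).funExt'
    (f := fun w => mkβ ce ctx i k t z (mkβ' ce ctx mc cs k t t w (cs.uS s)))
    (g := fun w => mkβ' ce ctx mc cs i t t (mkβ ce ctx i k t z w) (cs.uS s))
    (fun a b => by simp only [β'_add_left, β_add_right])
    (fun a b => by simp only [β_add_right, β'_add_left]) ?_ w
  intro m nn
  beta_reduce
  rw [β'_spec₄ ce ctx mc cs k, β_spec_t ce ctx, β_spec_t ce ctx,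
    β'_spec₄ ce ctx mc cs i]

lemma βcomm (i k h j : Fin n) (z : M i k) (w : NN k h) (y' : M' h j) :
    mkβ ce ctx i k j z (mkβ' ce ctx mc cs k h j w y')
      = mkβ' ce ctx mc cs i h j (mkβ ce ctx i k h z w) y' := by
  rcases eq_or_ne h t with rfl | hh
  · rcases eq_or_ne j h with rfl | hj
    · exact com_tt ce ctx mc cs i k z w y'
    · exact com_tn ce ctx mc cs i k j hj z w y'
  · rcases eq_or_ne j t with rfl | hj
    · exact com_nt ce ctx mc cs i k h hh z w y'
    · exact com_nn ce ctx mc cs i k h j hh hj z w y'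

end Comm
end MainAux
/-- in the setting of a generalised Morita context with `A t = R`,
a Morita context `(R, S; N, L; ζ, θ)` and their composition, the column-excision
`N_m = ⊕_{i,j} NN i j` carries: (i) a left module structure over the generalised
matrix ring `Λ = [A_i; M_ij]` whose components `β_ikj` are `φ_ikj` for `j ≠ t`
and `φ_ikt ⊗ 1_N` for `j = t`; (ii) a right module structure over the generalised
matrix ring `Λ' = [A'_i; M'_ij]` of the composition with the stated components
`β'_ikj`; and (iii) the two actions commute, so `N_m` is an
`[A_i; M_ij]`–`[A'_i; M'_ij]`-bimodule. -/
theorem stmt5 {n : ℕ} {A : Fin n → Type u} {M : Fin n → Fin n → Type u}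
    [∀ i, Ring (A i)] [∀ i j, AddCommGroup (M i j)]
    [∀ i j, Module (A i) (M i j)] [∀ i j, Module ((A j)ᵐᵒᵖ) (M i j)]
    [∀ i j, SMulCommClass (A i) ((A j)ᵐᵒᵖ) (M i j)]
    (ctx : GenMoritaCtx n A M) (t : Fin n)
    (S N L : Type u) [Ring S] [AddCommGroup N] [AddCommGroup L]
    [Module (A t) N] [Module Sᵐᵒᵖ N] [SMulCommClass (A t) Sᵐᵒᵖ N]
    [Module S L] [Module ((A t)ᵐᵒᵖ) L] [SMulCommClass S ((A t)ᵐᵒᵖ) L]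
    (mc : MoritaCtx (A t) S N L)
    (A' : Fin n → Type u) (M' : Fin n → Fin n → Type u)
    [∀ i, Ring (A' i)] [∀ i j, AddCommGroup (M' i j)]
    [∀ i j, Module (A' i) (M' i j)] [∀ i j, Module ((A' j)ᵐᵒᵖ) (M' i j)]
    [∀ i j, SMulCommClass (A' i) ((A' j)ᵐᵒᵖ) (M' i j)]
    (cs : CompSetup A M t S N L A' M')
    (ctx' : GenMoritaCtx n A' M')
    (hcomp : IsComposition A M t S N L A' M' ctx mc cs ctx')
    (Λ : Type u) [Ring Λ] (εΛ : Λ → ∀ i j, M i j) (hΛ : IsMatrixRing ctx Λ εΛ)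
    (Λ' : Type u) [Ring Λ'] (εΛ' : Λ' → ∀ i j, M' i j) (hΛ' : IsMatrixRing ctx' Λ' εΛ')
    (NN : Fin n → Fin n → Type u) [∀ i j, AddCommGroup (NN i j)]
    (ce : ColExc A M t N NN) :
    ∃ (β : ∀ i k j, M i k → NN k j → NN i j)
      (β' : ∀ i k j, NN i k → M' k j → NN i j)
      (instL : Module Λ (∀ i j, NN i j))
      (instR : Module Λ'ᵐᵒᵖ (∀ i j, NN i j)),
      ColExcLeft A M t N NN ctx ce β ∧
      ColExcRight A M t S N L A' M' NN ctx mc cs ce β' ∧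
      (∀ (c : Λ) (x : ∀ i j, NN i j) (i j : Fin n),
        msmul instL c x i j = ∑ k, β i k j (εΛ c i k) (x k j)) ∧
      (∀ (c' : Λ') (x : ∀ i j, NN i j) (i j : Fin n),
        msmul instR (op c') x i j = ∑ k, β' i k j (x i k) (εΛ' c' k j)) ∧
      (∀ (c : Λ) (c' : Λ') (x : ∀ i j, NN i j),
        msmul instL c (msmul instR (op c') x) = msmul instR (op c') (msmul instL c x)) := by

  classical
  have hε0 : εΛ 0 = 0 := eq_zero_of_self_add (by rw [← hΛ.map_add, add_zero])
  have hε'0 : εΛ' 0 = 0 := eq_zero_of_self_add (by rw [← hΛ'.map_add, add_zero])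
  have matOne_diag : ∀ i : Fin n, matOne ctx i i = ctx.δ i 1 := fun i => by
    simp only [matOne, dif_pos, cast_self]
  have matOne'_diag : ∀ j : Fin n, matOne ctx' j j = ctx'.δ j 1 := fun j => by
    simp only [matOne, dif_pos, cast_self]
  have matOne_ne : ∀ {i k : Fin n}, i ≠ k → matOne ctx i k = 0 := fun h => by
    simp only [matOne, dif_neg h]
  have matOne'_ne : ∀ {k j : Fin n}, k ≠ j → matOne ctx' k j = 0 := fun h => by
    simp only [matOne, dif_neg h]
  letI sL : SMul Λ (∀ i j, NN i j) :=
    ⟨fun c x i j => ∑ k, mkβ ce ctx i k j (εΛ c i k) (x k j)⟩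
  letI sR : SMul Λ'ᵐᵒᵖ (∀ i j, NN i j) :=
    ⟨fun c' x i j => ∑ k, mkβ' ce ctx mc cs i k j (x i k) (εΛ' c'.unop k j)⟩
  letI instL : Module Λ (∀ i j, NN i j) := Module.ofMinimalAxioms
    (fun c x y => funext fun i => funext fun j => by
      show ∑ k, mkβ ce ctx i k j (εΛ c i k) ((x + y) k j)
        = (∑ k, mkβ ce ctx i k j (εΛ c i k) (x k j))
          + ∑ k, mkβ ce ctx i k j (εΛ c i k) (y k j)
      simp only [Pi.add_apply, β_add_right, Finset.sum_add_distrib])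
    (fun c d x => funext fun i => funext fun j => by
      show ∑ k, mkβ ce ctx i k j (εΛ (c + d) i k) (x k j)
        = (∑ k, mkβ ce ctx i k j (εΛ c i k) (x k j))
          + ∑ k, mkβ ce ctx i k j (εΛ d i k) (x k j)
      simp only [hΛ.map_add, Pi.add_apply, β_add_left, Finset.sum_add_distrib])
    (fun c d x => funext fun i => funext fun j => by
      show ∑ h, mkβ ce ctx i h j (εΛ (c * d) i h) (x h j)
        = ∑ k, mkβ ce ctx i k j (εΛ c i k) (∑ h, mkβ ce ctx k h j (εΛ d k h) (x h j))
      calc ∑ h, mkβ ce ctx i h j (εΛ (c * d) i h) (x h j)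
          = ∑ h, ∑ k, mkβ ce ctx i h j (ctx.φ i k h (εΛ c i k) (εΛ d k h)) (x h j) := by
            refine Finset.sum_congr rfl fun h _ => ?_
            rw [hΛ.map_mul,
              show matMul ctx (εΛ c) (εΛ d) i h
                = ∑ k, ctx.φ i k h (εΛ c i k) (εΛ d k h) from rfl, β_sum_left]
        _ = ∑ h, ∑ k, mkβ ce ctx i k j (εΛ c i k) (mkβ ce ctx k h j (εΛ d k h) (x h j)) :=
            Finset.sum_congr rfl fun h _ => Finset.sum_congr rfl fun k _ =>
              β_assoc ce ctx i k h j _ _ _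
        _ = ∑ k, ∑ h, mkβ ce ctx i k j (εΛ c i k) (mkβ ce ctx k h j (εΛ d k h) (x h j)) :=
            Finset.sum_comm
        _ = ∑ k, mkβ ce ctx i k j (εΛ c i k) (∑ h, mkβ ce ctx k h j (εΛ d k h) (x h j)) :=
            Finset.sum_congr rfl fun k _ => (β_sum_right ce ctx i k j Finset.univ _ _).symm)
    (fun x => funext fun i => funext fun j => by
      show ∑ k, mkβ ce ctx i k j (εΛ 1 i k) (x k j) = x i j
      rw [hΛ.map_one, Finset.sum_eq_single i
        (fun k _ hk => by rw [matOne_ne (fun h => hk h.symm), β_zero_left])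
        (fun h => absurd (Finset.mem_univ i) h), matOne_diag, β_one])
  letI instR : Module Λ'ᵐᵒᵖ (∀ i j, NN i j) := Module.ofMinimalAxioms
    (fun c x y => funext fun i => funext fun j => by
      show ∑ k, mkβ' ce ctx mc cs i k j ((x + y) i k) (εΛ' c.unop k j)
        = (∑ k, mkβ' ce ctx mc cs i k j (x i k) (εΛ' c.unop k j))
          + ∑ k, mkβ' ce ctx mc cs i k j (y i k) (εΛ' c.unop k j)
      simp only [Pi.add_apply, β'_add_left, Finset.sum_add_distrib])
    (fun c d x => funext fun i => funext fun j => by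
      show ∑ k, mkβ' ce ctx mc cs i k j (x i k) (εΛ' (c.unop + d.unop) k j)
        = (∑ k, mkβ' ce ctx mc cs i k j (x i k) (εΛ' c.unop k j))
          + ∑ k, mkβ' ce ctx mc cs i k j (x i k) (εΛ' d.unop k j)
      simp only [hΛ'.map_add, Pi.add_apply, β'_add_right, Finset.sum_add_distrib])
    (fun a b x => funext fun i => funext fun j => by
      show ∑ h, mkβ' ce ctx mc cs i h j (x i h) (εΛ' (b.unop * a.unop) h j)
        = ∑ k, mkβ' ce ctx mc cs i k j
            (∑ h, mkβ' ce ctx mc cs i h k (x i h) (εΛ' b.unop h k)) (εΛ' a.unop k j)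
      calc ∑ h, mkβ' ce ctx mc cs i h j (x i h) (εΛ' (b.unop * a.unop) h j)
          = ∑ h, ∑ k, mkβ' ce ctx mc cs i h j (x i h)
              (ctx'.φ h k j (εΛ' b.unop h k) (εΛ' a.unop k j)) := by
            refine Finset.sum_congr rfl fun h _ => ?_
            rw [hΛ'.map_mul,
              show matMul ctx' (εΛ' b.unop) (εΛ' a.unop) h j
                = ∑ k, ctx'.φ h k j (εΛ' b.unop h k) (εΛ' a.unop k j) from rfl, β'_sum_right]
        _ = ∑ h, ∑ k, mkβ' ce ctx mc cs i k j
              (mkβ' ce ctx mc cs i h k (x i h) (εΛ' b.unop h k)) (εΛ' a.unop k j) :=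
            Finset.sum_congr rfl fun h _ => Finset.sum_congr rfl fun k _ =>
              (β'_assoc ce ctx mc cs ctx' hcomp i h k j _ _ _).symm
        _ = ∑ k, ∑ h, mkβ' ce ctx mc cs i k j
              (mkβ' ce ctx mc cs i h k (x i h) (εΛ' b.unop h k)) (εΛ' a.unop k j) :=
            Finset.sum_comm
        _ = ∑ k, mkβ' ce ctx mc cs i k j
              (∑ h, mkβ' ce ctx mc cs i h k (x i h) (εΛ' b.unop h k)) (εΛ' a.unop k j) :=
            Finset.sum_congr rfl fun k _ => (β'_sum_left ce ctx mc cs i k j Finset.univ _ _).symm)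
    (fun x => funext fun i => funext fun j => by
      show ∑ k, mkβ' ce ctx mc cs i k j (x i k) (εΛ' (MulOpposite.unop 1) k j) = x i j
      rw [unop_one, hΛ'.map_one, Finset.sum_eq_single j
        (fun k _ hk => by rw [matOne'_ne hk, β'_zero_right])
        (fun h => absurd (Finset.mem_univ j) h), matOne'_diag,
        β'_one ce ctx mc cs ctx' hcomp])
  refine ⟨mkβ ce ctx, mkβ' ce ctx mc cs, instL, instR,
    ⟨β_add_left ce ctx, β_add_right ce ctx, β_spec_ne ce ctx, β_spec_t ce ctx⟩,
    ⟨β'_add_left ce ctx mc cs, β'_add_right ce ctx mc cs, β'_spec₁ ce ctx mc cs,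
      β'_spec₂ ce ctx mc cs, β'_spec₃ ce ctx mc cs, β'_spec₄ ce ctx mc cs⟩,
    fun c x i j => rfl, fun c' x i j => rfl, ?_⟩
  intro c c' x
  funext i j
  show ∑ k, mkβ ce ctx i k j (εΛ c i k)
      (∑ h, mkβ' ce ctx mc cs k h j (x k h) (εΛ' c' h j))
    = ∑ h, mkβ' ce ctx mc cs i h j
      (∑ k, mkβ ce ctx i k h (εΛ c i k) (x k h)) (εΛ' c' h j)
  calc ∑ k, mkβ ce ctx i k j (εΛ c i k)
        (∑ h, mkβ' ce ctx mc cs k h j (x k h) (εΛ' c' h j))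
      = ∑ k, ∑ h, mkβ ce ctx i k j (εΛ c i k)
          (mkβ' ce ctx mc cs k h j (x k h) (εΛ' c' h j)) :=
        Finset.sum_congr rfl fun k _ => β_sum_right ce ctx i k j _ _ _
    _ = ∑ k, ∑ h, mkβ' ce ctx mc cs i h j
          (mkβ ce ctx i k h (εΛ c i k) (x k h)) (εΛ' c' h j) :=
        Finset.sum_congr rfl fun k _ => Finset.sum_congr rfl fun h _ =>
          βcomm ce ctx mc cs i k h j _ _ _
    _ = ∑ h, ∑ k, mkβ' ce ctx mc cs i h j
          (mkβ ce ctx i k h (εΛ c i k) (x k h)) (εΛ' c' h j) := Finset.sum_comm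
    _ = ∑ h, mkβ' ce ctx mc cs i h j
          (∑ k, mkβ ce ctx i k h (εΛ c i k) (x k h)) (εΛ' c' h j) :=
        Finset.sum_congr rfl fun h _ => (β'_sum_left ce ctx mc cs i h j Finset.univ _ _).symm
end

section
/- In the setting of a generalised Morita context (A_i; M_ij; φ_ikj) of size n with A_t = R, a Morita context (R, S; N, L; ζ, θ), and their composition (A′_i; M′_ij; φ′_ikj), equip the row-excision L_m with: (i) the left action of [A′_i; M′_ij] with components γ′_ikj = φ′_ikj for j ≠ t, and on column t: γ′_ttt(s ⊗ l ⊗ r) = (s·l) ⊗ r, γ′_tkt = 1_L ⊗ φ_tkt for k ≠ t, γ′_itt(m ⊗ n ⊗ l ⊗ r) = m·(ζ(n ⊗ l)·r) for i ≠ t, and γ′_ikt = φ_ikt for i, k ≠ t; and (ii) the right action of [A_i; M_ij] with components γ_tkj = 1_L ⊗ φ_tkj on row t and γ_ikj = φ_ikj for i ≠ t. Then (i) makes L_m a left [A′_i; M′_ij]-module, (ii) makes L_m a right [A_i; M_ij]-module, and (iii) these two actions commute, so L_m is an [A′_i; M′_ij]–[A_i; M_ij]-bimodule. -/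
universe u

open MulOpposite

variable {n : ℕ} {A : Fin n → Type u} {M : Fin n → Fin n → Type u}
    [∀ i, Ring (A i)] [∀ i j, AddCommGroup (M i j)]
    [∀ i j, Module (A i) (M i j)] [∀ i j, Module ((A j)ᵐᵒᵖ) (M i j)]
    [∀ i j, SMulCommClass (A i) ((A j)ᵐᵒᵖ) (M i j)]

namespace IsBTensor

variable {A : Type u} [Ring A] {M X : Type u} [AddCommGroup M] [AddCommGroup X]
  {ra : M → A → M} {la : A → X → X} {T : Type u} [AddCommGroup T] {τ : M → X → T}

noncomputable def liftHom (bt : IsBTensor A ra la T τ) {Z : Type u} [AddCommGroup Z]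
    (g : M → X → Z) (hg : IsBalancedMap A ra la g) : T →+ Z :=
  (bt.lift Z g hg).choose

theorem liftHom_spec (bt : IsBTensor A ra la T τ) {Z : Type u} [AddCommGroup Z]
    (g : M → X → Z) (hg : IsBalancedMap A ra la g) (m : M) (x : X) :
    bt.liftHom g hg (τ m x) = g m x :=
  (bt.lift Z g hg).choose_spec.1 m x

theorem hom_ext (bt : IsBTensor A ra la T τ) {Z : Type u} [AddCommGroup Z]
    {f g : T →+ Z} (h : ∀ m x, f (τ m x) = g (τ m x)) : f = g := by
  have hb : IsBalancedMap A ra la (fun m x => f (τ m x)) :=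
    ⟨fun m m' x => by simp only []; rw [bt.balanced.1, map_add],
     fun m x x' => by simp only []; rw [bt.balanced.2.1, map_add],
     fun a m x => by simp only []; rw [bt.balanced.2.2]⟩
  exact (bt.lift Z _ hb).unique (fun _ _ => rfl) (fun m x => (h m x).symm)

theorem ind (bt : IsBTensor A ra la T τ) {p : T → Prop} (hτ : ∀ m x, p (τ m x))
    (h0 : p 0) (hadd : ∀ a b, p a → p b → p (a + b)) (hneg : ∀ a, p a → p (-a)) :
    ∀ x, p x := by
  set H : AddSubgroup T := AddSubgroup.closure {z : T | ∃ m x, z = τ m x} with hH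
  have htop : ∀ x : T, x ∈ H := by
    have hq : (QuotientAddGroup.mk' H) = (0 : T →+ T ⧸ H) := by
      refine bt.hom_ext (fun m x => ?_)
      have : τ m x ∈ H := AddSubgroup.subset_closure ⟨m, x, rfl⟩
      simpa [QuotientAddGroup.mk'_apply] using (QuotientAddGroup.eq_zero_iff _).mpr this
    intro x
    have : QuotientAddGroup.mk' H x = 0 := by rw [hq]; rfl
    exact (QuotientAddGroup.eq_zero_iff _).mp (by simpa [QuotientAddGroup.mk'_apply] using this)
  let K : AddSubgroup T :=
    { carrier := {x | p x}
      add_mem' := fun ha hb => hadd _ _ ha hb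
      zero_mem' := h0
      neg_mem' := fun ha => hneg _ ha }
  intro x
  have hle : H ≤ K := by
    rw [hH]
    refine (AddSubgroup.closure_le K).mpr ?_
    rintro z ⟨m, xx, rfl⟩
    exact hτ m xx
  exact hle (htop x)

end IsBTensor
noncomputable section Work

variable {n : ℕ} {A : Fin n → Type u} {M : Fin n → Fin n → Type u}
    [∀ i, Ring (A i)] [∀ i j, AddCommGroup (M i j)]
    [∀ i j, Module (A i) (M i j)] [∀ i j, Module ((A j)ᵐᵒᵖ) (M i j)]
    [∀ i j, SMulCommClass (A i) ((A j)ᵐᵒᵖ) (M i j)]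
    (ctx : GenMoritaCtx n A M) (t : Fin n)
    (S N L : Type u) [Ring S] [AddCommGroup N] [AddCommGroup L]
    [Module (A t) N] [Module Sᵐᵒᵖ N] [SMulCommClass (A t) Sᵐᵒᵖ N]
    [Module S L] [Module ((A t)ᵐᵒᵖ) L] [SMulCommClass S ((A t)ᵐᵒᵖ) L]
    (mc : MoritaCtx (A t) S N L)
    (A' : Fin n → Type u) (M' : Fin n → Fin n → Type u)
    [∀ i, Ring (A' i)] [∀ i j, AddCommGroup (M' i j)]
    [∀ i j, Module (A' i) (M' i j)] [∀ i j, Module ((A' j)ᵐᵒᵖ) (M' i j)]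
    [∀ i j, SMulCommClass (A' i) ((A' j)ᵐᵒᵖ) (M' i j)]
    (cs : CompSetup A M t S N L A' M')
    (LL : Fin n → Fin n → Type u) [∀ i j, AddCommGroup (LL i j)]
    (re : RowExc A M t L LL)

/-- Bundled `φ` of a generalised Morita context. -/
def phiHom (i k j : Fin n) : M i k →+ (M k j →+ M i j) :=
  AddMonoidHom.mk' (fun x => AddMonoidHom.mk' (ctx.φ i k j x) (ctx.φ_add_right i k j x))
    (fun x x' => AddMonoidHom.ext fun y => ctx.φ_add_left i k j x x' y)

@[simp] lemma phiHom_apply (i k j : Fin n) (x : M i k) (y : M k j) :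
    phiHom ctx i k j x y = ctx.φ i k j x y := rfl

/-- Dummy to force inclusion of section variables into definitions. -/
def touch {α : Sort*} {β : Sort*} (_ : α) (b : β) : β := b

@[simp] lemma touch_eq {α : Sort*} {β : Sort*} (a : α) (b : β) : touch a b = b := rfl

section lpLemmas

lemma lp_add_left (j : Fin n) (l l' : L) (m : M t j) :
    re.lp j (l + l') m = re.lp j l m + re.lp j l' m := (re.lp_tensor j).balanced.1 l l' m

lemma lp_add_right (j : Fin n) (l : L) (m m' : M t j) :
    re.lp j l (m + m') = re.lp j l m + re.lp j l m' := (re.lp_tensor j).balanced.2.1 l m m'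

lemma lp_bal (j : Fin n) (a : A t) (l : L) (m : M t j) :
    re.lp j (op a • l) m = re.lp j l (a • m) := (re.lp_tensor j).balanced.2.2 a l m

end lpLemmas

/-- Right action on the `t`-row. -/
def rGammaT (k j : Fin n) : LL t k →+ (M k j →+ LL t j) :=
  touch ctx <| touch t <| touch S <| touch N <| touch L <| touch mc <| touch A' <| touch M' <| touch cs <| touch LL <| touch re <|
  (re.lp_tensor k).liftHom
    (fun l m => AddMonoidHom.mk' (fun y => re.lp j l (ctx.φ t k j m y))
      (fun y y' => by rw [ctx.φ_add_right, lp_add_right]))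
    ⟨fun l l' m => AddMonoidHom.ext fun y => by
        simp only [AddMonoidHom.mk'_apply, AddMonoidHom.add_apply]
        rw [lp_add_left],
     fun l m m' => AddMonoidHom.ext fun y => by
        simp only [AddMonoidHom.mk'_apply, AddMonoidHom.add_apply]
        rw [ctx.φ_add_left, lp_add_right],
     fun a l m => AddMonoidHom.ext fun y => by
        simp only [AddMonoidHom.mk'_apply]
        rw [lp_bal, ctx.φ_smul_left]⟩

/-- Right action on rows `i ≠ t`. -/
def rGammaNe (i k j : Fin n) (hi : i ≠ t) : LL i k →+ (M k j →+ LL i j) :=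
  touch ctx <| touch t <| touch S <| touch N <| touch L <| touch mc <| touch A' <| touch M' <| touch cs <| touch LL <| touch re <|
  AddMonoidHom.mk'
    (fun x => AddMonoidHom.mk' (fun y => re.el i j hi (ctx.φ i k j ((re.el i k hi).symm x) y))
      (fun y y' => by rw [ctx.φ_add_right, map_add]))
    (fun x x' => AddMonoidHom.ext fun y => by
      simp only [AddMonoidHom.mk'_apply, AddMonoidHom.add_apply]
      rw [map_add, ctx.φ_add_left, map_add])

/-- The right-action components `γ`. -/
def rGamma (i k j : Fin n) : LL i k →+ (M k j →+ LL i j) :=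
  touch ctx <| touch t <| touch S <| touch N <| touch L <| touch mc <| touch A' <| touch M' <| touch cs <| touch LL <| touch re <|
  if hi : i = t then cast (by rw [hi]) (rGammaT ctx t S N L mc A' M' cs LL re k j)
  else rGammaNe ctx t S N L mc A' M' cs LL re i k j hi

lemma rGamma_t (k j : Fin n) : rGamma ctx t S N L mc A' M' cs LL re t k j = rGammaT ctx t S N L mc A' M' cs LL re k j := by
  unfold rGamma touch; rw [dif_pos rfl]; rfl

lemma rGamma_ne (i k j : Fin n) (hi : i ≠ t) :
    rGamma ctx t S N L mc A' M' cs LL re i k j = rGammaNe ctx t S N L mc A' M' cs LL re i k j hi := by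
  unfold rGamma touch; rw [dif_neg hi]

lemma rGamma_lp (k j : Fin n) (l : L) (m : M t k) (y : M k j) :
    rGamma ctx t S N L mc A' M' cs LL re t k j (re.lp k l m) y = re.lp j l (ctx.φ t k j m y) := by
  rw [rGamma_t]
  unfold rGammaT touch
  erw [(re.lp_tensor k).liftHom_spec]
  rfl

lemma rGamma_el (i k j : Fin n) (hi : i ≠ t) (x : M i k) (y : M k j) :
    rGamma ctx t S N L mc A' M' cs LL re i k j (re.el i k hi x) y = re.el i j hi (ctx.φ i k j x y) := by
  rw [rGamma_ne ctx t S N L mc A' M' cs LL re i k j hi]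
  simp only [rGammaNe, touch_eq, AddMonoidHom.mk'_apply, AddEquiv.symm_apply_apply]

/-- Left-action component: `i ≠ t`, `k ≠ t`. -/
def lGammaNN (i k j : Fin n) (hi : i ≠ t) (hk : k ≠ t) : M' i k →+ (LL k j →+ LL i j) :=
  touch ctx <| touch t <| touch S <| touch N <| touch L <| touch mc <| touch A' <| touch M' <| touch cs <| touch LL <| touch re <|
  AddMonoidHom.mk'
    (fun x => AddMonoidHom.mk'
      (fun y => re.el i j hi (ctx.φ i k j ((cs.ee i k hi hk).symm x) ((re.el k j hk).symm y)))
      (fun y y' => by rw [map_add, ctx.φ_add_right, map_add]))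
    (fun x x' => AddMonoidHom.ext fun y => by
      simp only [AddMonoidHom.mk'_apply, AddMonoidHom.add_apply]
      rw [map_add, ctx.φ_add_left, map_add])

/-- Left-action component: `i = t`, `k ≠ t`. -/
def lGammaTN (k j : Fin n) (hk : k ≠ t) : M' t k →+ (LL k j →+ LL t j) :=
  touch ctx <| touch t <| touch S <| touch N <| touch L <| touch mc <| touch A' <| touch M' <| touch cs <| touch LL <| touch re <|
  (cs.tmulL_tensor k hk).liftHom
    (fun l m => AddMonoidHom.mk'
      (fun y => re.lp j l (ctx.φ t k j m ((re.el k j hk).symm y)))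
      (fun y y' => by rw [map_add, ctx.φ_add_right, lp_add_right]))
    ⟨fun l l' m => AddMonoidHom.ext fun y => by
        simp only [AddMonoidHom.mk'_apply, AddMonoidHom.add_apply]
        rw [lp_add_left],
     fun l m m' => AddMonoidHom.ext fun y => by
        simp only [AddMonoidHom.mk'_apply, AddMonoidHom.add_apply]
        rw [ctx.φ_add_left, lp_add_right],
     fun a l m => AddMonoidHom.ext fun y => by
        simp only [AddMonoidHom.mk'_apply]
        rw [lp_bal, ctx.φ_smul_left]⟩

/-- Left-action component: `i ≠ t`, `k = t`. -/
def lGammaNT (i j : Fin n) (hi : i ≠ t) : M' i t →+ (LL t j →+ LL i j) :=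
  touch ctx <| touch t <| touch S <| touch N <| touch L <| touch mc <| touch A' <| touch M' <| touch cs <| touch LL <| touch re <|
  (cs.tmulN_tensor i hi).liftHom
    (fun m nn => (re.lp_tensor j).liftHom
      (fun l m' => re.el i j hi (ctx.φ i t j (op (mc.zeta nn l) • m) m'))
      ⟨fun l l' m' => by
          simp only []
          rw [mc.zeta_add_right, op_add, add_smul, ctx.φ_add_left, map_add],
       fun l m' m'' => by
          simp only []
          rw [ctx.φ_add_right, map_add],
       fun a l m' => by
          simp only []
          rw [mc.zeta_right, op_mul, mul_smul, ctx.φ_balanced]⟩)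
    ⟨fun m m₂ nn => (re.lp_tensor j).hom_ext fun l m' => by
        simp only [AddMonoidHom.add_apply]
        erw [(re.lp_tensor j).liftHom_spec, (re.lp_tensor j).liftHom_spec,
          (re.lp_tensor j).liftHom_spec, smul_add, ctx.φ_add_left, map_add],
     fun m nn nn' => (re.lp_tensor j).hom_ext fun l m' => by
        simp only [AddMonoidHom.add_apply]
        erw [(re.lp_tensor j).liftHom_spec, (re.lp_tensor j).liftHom_spec,
          (re.lp_tensor j).liftHom_spec, mc.zeta_add_left, op_add, add_smul,
          ctx.φ_add_left, map_add],
     fun a m nn => (re.lp_tensor j).hom_ext fun l m' => by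
        erw [(re.lp_tensor j).liftHom_spec, (re.lp_tensor j).liftHom_spec,
          mc.zeta_left, op_mul, mul_smul]⟩

/-- Left-action component: `i = t`, `k = t`. -/
def lGammaTT (j : Fin n) : M' t t →+ (LL t j →+ LL t j) :=
  touch ctx <| touch t <| touch S <| touch N <| touch L <| touch mc <| touch A' <| touch M' <| touch cs <| touch LL <| touch re <|
  AddMonoidHom.mk'
    (fun x => (re.lp_tensor j).liftHom
      (fun l m => re.lp j (cs.uS.symm x • l) m)
      ⟨fun l l' m => by simp only []; rw [smul_add, lp_add_left],
       fun l m m' => by simp only []; rw [lp_add_right],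
       fun a l m => by simp only []; rw [smul_comm, lp_bal]⟩)
    (fun x x' => (re.lp_tensor j).hom_ext fun l m => by
      simp only [AddMonoidHom.add_apply]
      erw [(re.lp_tensor j).liftHom_spec, (re.lp_tensor j).liftHom_spec,
        (re.lp_tensor j).liftHom_spec, map_add, add_smul, lp_add_left])

/-- The left-action components `γ'`. -/
def lGamma (i k j : Fin n) : M' i k →+ (LL k j →+ LL i j) :=
  touch ctx <| touch t <| touch S <| touch N <| touch L <| touch mc <| touch A' <| touch M' <| touch cs <| touch LL <| touch re <|
  if hi : i = t then
    if hk : k = t then cast (by rw [hi, hk]) (lGammaTT ctx t S N L mc A' M' cs LL re j)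
    else cast (by rw [hi]) (lGammaTN ctx t S N L mc A' M' cs LL re k j hk)
  else
    if hk : k = t then cast (by rw [hk]) (lGammaNT ctx t S N L mc A' M' cs LL re i j hi)
    else lGammaNN ctx t S N L mc A' M' cs LL re i k j hi hk

lemma lGamma_tt (j : Fin n) :
    lGamma ctx t S N L mc A' M' cs LL re t t j = lGammaTT ctx t S N L mc A' M' cs LL re j := by
  unfold lGamma touch; rw [dif_pos rfl, dif_pos rfl]; rfl

lemma lGamma_tn (k j : Fin n) (hk : k ≠ t) :
    lGamma ctx t S N L mc A' M' cs LL re t k j = lGammaTN ctx t S N L mc A' M' cs LL re k j hk := by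
  unfold lGamma touch; rw [dif_pos rfl, dif_neg hk]; rfl

lemma lGamma_nt (i j : Fin n) (hi : i ≠ t) :
    lGamma ctx t S N L mc A' M' cs LL re i t j = lGammaNT ctx t S N L mc A' M' cs LL re i j hi := by
  unfold lGamma touch; rw [dif_neg hi, dif_pos rfl]; rfl

lemma lGamma_nn (i k j : Fin n) (hi : i ≠ t) (hk : k ≠ t) :
    lGamma ctx t S N L mc A' M' cs LL re i k j = lGammaNN ctx t S N L mc A' M' cs LL re i k j hi hk := by
  unfold lGamma touch; rw [dif_neg hi, dif_neg hk]

lemma lGamma_spec₁ (i k j : Fin n) (hi : i ≠ t) (hk : k ≠ t) (x : M i k) (y : M k j) :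
    lGamma ctx t S N L mc A' M' cs LL re i k j (cs.ee i k hi hk x) (re.el k j hk y)
      = re.el i j hi (ctx.φ i k j x y) := by
  rw [lGamma_nn ctx t S N L mc A' M' cs LL re i k j hi hk]
  simp only [lGammaNN, touch_eq, AddMonoidHom.mk'_apply, AddEquiv.symm_apply_apply]

lemma lGamma_spec₂ (k j : Fin n) (hk : k ≠ t) (l : L) (m : M t k) (y : M k j) :
    lGamma ctx t S N L mc A' M' cs LL re t k j (cs.tmulL k hk l m) (re.el k j hk y)
      = re.lp j l (ctx.φ t k j m y) := by
  rw [lGamma_tn ctx t S N L mc A' M' cs LL re k j hk]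
  unfold lGammaTN touch
  erw [(cs.tmulL_tensor k hk).liftHom_spec]
  simp only [AddMonoidHom.mk'_apply, AddEquiv.symm_apply_apply]

lemma lGamma_spec₃ (i j : Fin n) (hi : i ≠ t) (m : M i t) (nn : N) (l : L) (m' : M t j) :
    lGamma ctx t S N L mc A' M' cs LL re i t j (cs.tmulN i hi m nn) (re.lp j l m')
      = re.el i j hi (ctx.φ i t j (op (mc.zeta nn l) • m) m') := by
  rw [lGamma_nt ctx t S N L mc A' M' cs LL re i j hi]
  unfold lGammaNT touch
  erw [(cs.tmulN_tensor i hi).liftHom_spec, (re.lp_tensor j).liftHom_spec]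

lemma lGamma_spec₄ (j : Fin n) (s : S) (l : L) (m : M t j) :
    lGamma ctx t S N L mc A' M' cs LL re t t j (cs.uS s) (re.lp j l m)
      = re.lp j (s • l) m := by
  rw [lGamma_tt ctx t S N L mc A' M' cs LL re j]
  unfold lGammaTT touch
  simp only [AddMonoidHom.mk'_apply]
  erw [(re.lp_tensor j).liftHom_spec, AddEquiv.symm_apply_apply]

variable (ctx' : GenMoritaCtx n A' M')

local notation "GL" => lGamma ctx t S N L mc A' M' cs LL re
local notation "GR" => rGamma ctx t S N L mc A' M' cs LL re

lemma idLeft (hcomp : IsComposition A M t S N L A' M' ctx mc cs ctx')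
    (i j : Fin n) (w : LL i j) : GL i i j (ctx'.δ i 1) w = w := by
  by_cases hi : i = t
  · obtain rfl : t = i := hi.symm
    have h1 : ctx'.δ t 1 = cs.uS 1 := by rw [hcomp.delta_t_spec, map_one]
    rw [h1]
    refine (re.lp_tensor j).ind (p := fun w => GL t t j (cs.uS 1) w = w) ?_ ?_ ?_ ?_ w
    · intro l m
      rw [lGamma_spec₄, one_smul]
    · exact map_zero _
    · intro a b ha hb; rw [map_add, ha, hb]
    · intro a ha; rw [map_neg, ha]
  · obtain ⟨w₀, rfl⟩ := (re.el i j hi).surjective w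
    rw [hcomp.delta_spec i hi, map_one, lGamma_spec₁ ctx t S N L mc A' M' cs LL re i i j hi hi,
      ctx.φ_diag_left, one_smul]

lemma idRight (i j : Fin n) (w : LL i j) : GR i j j w (ctx.δ j 1) = w := by
  by_cases hi : i = t
  · obtain rfl : t = i := hi.symm
    refine (re.lp_tensor j).ind (p := fun w => GR t j j w (ctx.δ j 1) = w) ?_ ?_ ?_ ?_ w
    · intro l m
      rw [rGamma_lp, ctx.φ_diag_right, op_one, one_smul]
    · simp only [map_zero, AddMonoidHom.zero_apply]
    · intro a b ha hb; simp only [map_add, AddMonoidHom.add_apply]; rw [ha, hb]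
    · intro a ha; simp only [map_neg, AddMonoidHom.neg_apply]; rw [ha]
  · obtain ⟨w₀, rfl⟩ := (re.el i j hi).surjective w
    rw [rGamma_el ctx t S N L mc A' M' cs LL re i j j hi, ctx.φ_diag_right, op_one, one_smul]

lemma assocR (i h k j : Fin n) (x : LL i h) (z : M h k) (w : M k j) :
    GR i k j (GR i h k x z) w = GR i h j x (ctx.φ h k j z w) := by
  by_cases hi : i = t
  · obtain rfl : t = i := hi.symm
    refine (re.lp_tensor h).ind
      (p := fun x => GR t k j (GR t h k x z) w = GR t h j x (ctx.φ h k j z w)) ?_ ?_ ?_ ?_ x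
    · intro l m
      rw [rGamma_lp, rGamma_lp, rGamma_lp, ctx.φ_assoc]
    · simp only [map_zero, AddMonoidHom.zero_apply]
    · intro a b ha hb
      simp only [map_add, AddMonoidHom.add_apply]
      rw [ha, hb]
    · intro a ha
      simp only [map_neg, AddMonoidHom.neg_apply]
      rw [ha]
  · obtain ⟨x₀, rfl⟩ := (re.el i h hi).surjective x
    rw [rGamma_el ctx t S N L mc A' M' cs LL re i h k hi,
      rGamma_el ctx t S N L mc A' M' cs LL re i k j hi,
      rGamma_el ctx t S N L mc A' M' cs LL re i h j hi, ctx.φ_assoc]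

lemma commuteLR (i k h j : Fin n) (x : M' i k) (y : LL k h) (z : M h j) :
    GL i k j x (GR k h j y z) = GR i h j (GL i k h x y) z := by
  by_cases hi : i = t <;> by_cases hk : k = t
  · obtain rfl : t = i := hi.symm; obtain rfl : t = k := hk.symm
    obtain ⟨s, rfl⟩ := cs.uS.surjective x
    refine (re.lp_tensor h).ind
      (p := fun y => GL t t j (cs.uS s) (GR t h j y z) = GR t h j (GL t t h (cs.uS s) y) z)
      ?_ ?_ ?_ ?_ y
    · intro l m
      rw [rGamma_lp, lGamma_spec₄, lGamma_spec₄, rGamma_lp]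
    · simp only [map_zero, AddMonoidHom.zero_apply]
    · intro a b ha hb
      simp only [map_add, AddMonoidHom.add_apply]
      rw [ha, hb]
    · intro a ha
      simp only [map_neg, AddMonoidHom.neg_apply]
      rw [ha]
  · obtain rfl : t = i := hi.symm
    obtain ⟨y₀, rfl⟩ := (re.el k h hk).surjective y
    refine (cs.tmulL_tensor k hk).ind
      (p := fun x => GL t k j x (GR k h j (re.el k h hk y₀) z)
        = GR t h j (GL t k h x (re.el k h hk y₀)) z) ?_ ?_ ?_ ?_ x
    · intro l m
      rw [rGamma_el ctx t S N L mc A' M' cs LL re k h j hk,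
        lGamma_spec₂ ctx t S N L mc A' M' cs LL re k j hk,
        lGamma_spec₂ ctx t S N L mc A' M' cs LL re k h hk, rGamma_lp, ctx.φ_assoc]
    · simp only [map_zero, AddMonoidHom.zero_apply]
    · intro a b ha hb
      simp only [map_add, AddMonoidHom.add_apply]
      rw [ha, hb]
    · intro a ha
      simp only [map_neg, AddMonoidHom.neg_apply]
      rw [ha]
  · obtain rfl : t = k := hk.symm
    refine (cs.tmulN_tensor i hi).ind
      (p := fun x => ∀ y, GL i t j x (GR t h j y z) = GR i h j (GL i t h x y) z)
      ?_ ?_ ?_ ?_ x y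
    · intro m nn
      refine (re.lp_tensor h).ind
        (p := fun y => GL i t j (cs.tmulN i hi m nn) (GR t h j y z)
          = GR i h j (GL i t h (cs.tmulN i hi m nn) y) z) ?_ ?_ ?_ ?_
      · intro l m₀
        rw [rGamma_lp, lGamma_spec₃ ctx t S N L mc A' M' cs LL re i j hi,
          lGamma_spec₃ ctx t S N L mc A' M' cs LL re i h hi,
          rGamma_el ctx t S N L mc A' M' cs LL re i h j hi, ctx.φ_assoc]
      · simp only [map_zero, AddMonoidHom.zero_apply]
      · intro a b ha hb
        simp only [map_add, AddMonoidHom.add_apply]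
        rw [ha, hb]
      · intro a ha
        simp only [map_neg, AddMonoidHom.neg_apply]
        rw [ha]
    · intro y; simp only [map_zero, AddMonoidHom.zero_apply]
    · intro a b ha hb y
      simp only [map_add, AddMonoidHom.add_apply]
      rw [ha, hb]
    · intro a ha y
      simp only [map_neg, AddMonoidHom.neg_apply]
      rw [ha]
  · obtain ⟨x₀, rfl⟩ := (cs.ee i k hi hk).surjective x
    obtain ⟨y₀, rfl⟩ := (re.el k h hk).surjective y
    rw [rGamma_el ctx t S N L mc A' M' cs LL re k h j hk,
      lGamma_spec₁ ctx t S N L mc A' M' cs LL re i k j hi hk,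
      lGamma_spec₁ ctx t S N L mc A' M' cs LL re i k h hi hk,
      rGamma_el ctx t S N L mc A' M' cs LL re i h j hi, ctx.φ_assoc]

lemma assocL (hcomp : IsComposition A M t S N L A' M' ctx mc cs ctx')
    (i h k j : Fin n) (x : M' i h) (z : M' h k) (w : LL k j) :
    GL i k j (phiHom ctx' i h k x z) w = GL i h j x (GL h k j z w) := by
  by_cases hi : i = t <;> by_cases hh : h = t <;> by_cases hk : k = t
  -- case TTT
  · obtain rfl : t = i := hi.symm
    obtain rfl : t = h := hh.symm
    obtain rfl : t = k := hk.symm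
    obtain ⟨s, rfl⟩ := cs.uS.surjective x
    obtain ⟨s', rfl⟩ := cs.uS.surjective z
    induction w using IsBTensor.ind (bt := re.lp_tensor j) with
    | hτ l m =>
      simp only [phiHom_apply]
      rw [hcomp.phi_ttt, lGamma_spec₄, lGamma_spec₄, lGamma_spec₄, mul_smul]
    | h0 => simp only [map_zero]
    | hadd a b ha hb => simp only [map_add]; rw [ha, hb]
    | hneg a ha => simp only [map_neg]; rw [ha]
  -- case TTN
  · obtain rfl : t = i := hi.symm
    obtain rfl : t = h := hh.symm
    obtain ⟨w₀, rfl⟩ := (re.el k j hk).surjective w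
    obtain ⟨s, rfl⟩ := cs.uS.surjective x
    induction z using IsBTensor.ind (bt := cs.tmulL_tensor k hk) with
    | hτ l m =>
      simp only [phiHom_apply]
      rw [hcomp.phi_ttj k hk s l m,
        lGamma_spec₂ ctx t S N L mc A' M' cs LL re k j hk,
        lGamma_spec₂ ctx t S N L mc A' M' cs LL re k j hk,
        lGamma_spec₄]
    | h0 => simp only [map_zero, AddMonoidHom.zero_apply]
    | hadd a b ha hb => simp only [map_add, AddMonoidHom.add_apply]; rw [ha, hb]
    | hneg a ha => simp only [map_neg, AddMonoidHom.neg_apply]; rw [ha]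
  -- case TNT
  · obtain rfl : t = i := hi.symm
    obtain rfl : t = k := hk.symm
    induction x using IsBTensor.ind (bt := cs.tmulL_tensor h hh) with
    | hτ l m =>
      induction z using IsBTensor.ind (bt := cs.tmulN_tensor h hh) with
      | hτ m' nn =>
        induction w using IsBTensor.ind (bt := re.lp_tensor j) with
        | hτ l' m'' =>
          simp only [phiHom_apply]
          rw [hcomp.phi_tkt h hh l m m' nn, lGamma_spec₄,
            lGamma_spec₃ ctx t S N L mc A' M' cs LL re h j hh,
            lGamma_spec₂ ctx t S N L mc A' M' cs LL re h j hh]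
          set r₀ := (ctx.δ t).symm (ctx.φ t h t m m') with hr
          have hφ : ctx.φ t h t m m' = ctx.δ t r₀ := ((ctx.δ t).apply_symm_apply _).symm
          rw [mc.assoc_right, smul_smul, ← op_mul, lp_bal,
            ctx.φ_balanced, ctx.φ_assoc, hφ, ctx.φ_diag_left, smul_smul]
        | h0 => simp only [map_zero]
        | hadd a b ha hb => simp only [map_add]; rw [ha, hb]
        | hneg a ha => simp only [map_neg]; rw [ha]
      | h0 => simp only [map_zero, AddMonoidHom.zero_apply]
      | hadd a b ha hb => simp only [map_add, AddMonoidHom.add_apply]; rw [ha, hb]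
      | hneg a ha => simp only [map_neg, AddMonoidHom.neg_apply]; rw [ha]
    | h0 => simp only [map_zero, AddMonoidHom.zero_apply]
    | hadd a b ha hb => simp only [map_add, AddMonoidHom.add_apply]; rw [ha, hb]
    | hneg a ha => simp only [map_neg, AddMonoidHom.neg_apply]; rw [ha]
  -- case TNN
  · obtain rfl : t = i := hi.symm
    obtain ⟨z₀, rfl⟩ := (cs.ee h k hh hk).surjective z
    obtain ⟨w₀, rfl⟩ := (re.el k j hk).surjective w
    induction x using IsBTensor.ind (bt := cs.tmulL_tensor h hh) with
    | hτ l m =>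
      simp only [phiHom_apply]
      rw [hcomp.phi_tkj h k hh hk l m z₀,
        lGamma_spec₂ ctx t S N L mc A' M' cs LL re k j hk,
        lGamma_spec₁ ctx t S N L mc A' M' cs LL re h k j hh hk,
        lGamma_spec₂ ctx t S N L mc A' M' cs LL re h j hh, ctx.φ_assoc]
    | h0 => simp only [map_zero, AddMonoidHom.zero_apply]
    | hadd a b ha hb => simp only [map_add, AddMonoidHom.add_apply]; rw [ha, hb]
    | hneg a ha => simp only [map_neg, AddMonoidHom.neg_apply]; rw [ha]
  -- case NTT
  · obtain rfl : t = h := hh.symm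
    obtain rfl : t = k := hk.symm
    obtain ⟨s, rfl⟩ := cs.uS.surjective z
    induction x using IsBTensor.ind (bt := cs.tmulN_tensor i hi) with
    | hτ m nn =>
      induction w using IsBTensor.ind (bt := re.lp_tensor j) with
      | hτ l m' =>
        simp only [phiHom_apply]
        rw [hcomp.phi_itt i hi m nn s,
          lGamma_spec₃ ctx t S N L mc A' M' cs LL re i j hi,
          lGamma_spec₄,
          lGamma_spec₃ ctx t S N L mc A' M' cs LL re i j hi, mc.zeta_balanced]
      | h0 => simp only [map_zero]
      | hadd a b ha hb => simp only [map_add]; rw [ha, hb]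
      | hneg a ha => simp only [map_neg]; rw [ha]
    | h0 => simp only [map_zero, AddMonoidHom.zero_apply]
    | hadd a b ha hb => simp only [map_add, AddMonoidHom.add_apply]; rw [ha, hb]
    | hneg a ha => simp only [map_neg, AddMonoidHom.neg_apply]; rw [ha]
  -- case NTN
  · obtain rfl : t = h := hh.symm
    obtain ⟨w₀, rfl⟩ := (re.el k j hk).surjective w
    induction x using IsBTensor.ind (bt := cs.tmulN_tensor i hi) with
    | hτ m nn =>
      induction z using IsBTensor.ind (bt := cs.tmulL_tensor k hk) with
      | hτ l m₀ =>
        simp only [phiHom_apply]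
        rw [hcomp.phi_itj i k hi hk m nn l m₀,
          lGamma_spec₁ ctx t S N L mc A' M' cs LL re i k j hi hk,
          lGamma_spec₂ ctx t S N L mc A' M' cs LL re k j hk,
          lGamma_spec₃ ctx t S N L mc A' M' cs LL re i j hi, ctx.φ_assoc]
      | h0 => simp only [map_zero, AddMonoidHom.zero_apply]
      | hadd a b ha hb => simp only [map_add, AddMonoidHom.add_apply]; rw [ha, hb]
      | hneg a ha => simp only [map_neg, AddMonoidHom.neg_apply]; rw [ha]
    | h0 => simp only [map_zero, AddMonoidHom.zero_apply]
    | hadd a b ha hb => simp only [map_add, AddMonoidHom.add_apply]; rw [ha, hb]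
    | hneg a ha => simp only [map_neg, AddMonoidHom.neg_apply]; rw [ha]
  -- case NNT
  · obtain rfl : t = k := hk.symm
    obtain ⟨x₀, rfl⟩ := (cs.ee i h hi hh).surjective x
    induction z using IsBTensor.ind (bt := cs.tmulN_tensor h hh) with
    | hτ m nn =>
      induction w using IsBTensor.ind (bt := re.lp_tensor j) with
      | hτ l m' =>
        simp only [phiHom_apply]
        rw [hcomp.phi_ikt i h hi hh x₀ m nn,
          lGamma_spec₃ ctx t S N L mc A' M' cs LL re i j hi,
          lGamma_spec₃ ctx t S N L mc A' M' cs LL re h j hh,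
          lGamma_spec₁ ctx t S N L mc A' M' cs LL re i h j hi hh,
          ctx.φ_assoc, ctx.φ_smul_right]
      | h0 => simp only [map_zero]
      | hadd a b ha hb => simp only [map_add]; rw [ha, hb]
      | hneg a ha => simp only [map_neg]; rw [ha]
    | h0 => simp only [map_zero, AddMonoidHom.zero_apply]
    | hadd a b ha hb => simp only [map_add, AddMonoidHom.add_apply]; rw [ha, hb]
    | hneg a ha => simp only [map_neg, AddMonoidHom.neg_apply]; rw [ha]
  -- case NNN
  · obtain ⟨x₀, rfl⟩ := (cs.ee i h hi hh).surjective x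
    obtain ⟨z₀, rfl⟩ := (cs.ee h k hh hk).surjective z
    obtain ⟨w₀, rfl⟩ := (re.el k j hk).surjective w
    simp only [phiHom_apply]
    rw [hcomp.phi_ikj i h k hi hh hk x₀ z₀,
      lGamma_spec₁ ctx t S N L mc A' M' cs LL re i k j hi hk,
      lGamma_spec₁ ctx t S N L mc A' M' cs LL re h k j hh hk,
      lGamma_spec₁ ctx t S N L mc A' M' cs LL re i h j hi hh, ctx.φ_assoc]

end Work

lemma matOne_diag {n : ℕ} {A : Fin n → Type u} {M : Fin n → Fin n → Type u}
    [∀ i, Ring (A i)] [∀ i j, AddCommGroup (M i j)]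
    [∀ i j, Module (A i) (M i j)] [∀ i j, Module ((A j)ᵐᵒᵖ) (M i j)]
    [∀ i j, SMulCommClass (A i) ((A j)ᵐᵒᵖ) (M i j)]
    (c : GenMoritaCtx n A M) (i : Fin n) : matOne c i i = c.δ i 1 := by
  unfold matOne
  rw [dif_pos rfl]
  rfl

lemma matOne_off {n : ℕ} {A : Fin n → Type u} {M : Fin n → Fin n → Type u}
    [∀ i, Ring (A i)] [∀ i j, AddCommGroup (M i j)]
    [∀ i j, Module (A i) (M i j)] [∀ i j, Module ((A j)ᵐᵒᵖ) (M i j)]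
    [∀ i j, SMulCommClass (A i) ((A j)ᵐᵒᵖ) (M i j)]
    (c : GenMoritaCtx n A M) {i j : Fin n} (h : i ≠ j) : matOne c i j = 0 := by
  unfold matOne
  rw [dif_neg h]

/-- in the setting of a generalised Morita context with `A t = R`,
a Morita context `(R, S; N, L; ζ, θ)` and their composition, the row-excision
`L_m = ⊕_{i,j} LL i j` carries: (i) a left module structure over the generalised
matrix ring `Λ' = [A'_i; M'_ij]` of the composition with the stated components
`γ'_ikj`; (ii) a right module structure over the generalised matrix ring
`Λ = [A_i; M_ij]` with components `γ_ikj = φ_ikj` for `i ≠ t` and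
`γ_tkj = 1_L ⊗ φ_tkj` on row `t`; and (iii) the two actions commute, so `L_m` is
an `[A'_i; M'_ij]`–`[A_i; M_ij]`-bimodule. -/
theorem stmt6 {n : ℕ} {A : Fin n → Type u} {M : Fin n → Fin n → Type u}
    [∀ i, Ring (A i)] [∀ i j, AddCommGroup (M i j)]
    [∀ i j, Module (A i) (M i j)] [∀ i j, Module ((A j)ᵐᵒᵖ) (M i j)]
    [∀ i j, SMulCommClass (A i) ((A j)ᵐᵒᵖ) (M i j)]
    (ctx : GenMoritaCtx n A M) (t : Fin n)
    (S N L : Type u) [Ring S] [AddCommGroup N] [AddCommGroup L]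
    [Module (A t) N] [Module Sᵐᵒᵖ N] [SMulCommClass (A t) Sᵐᵒᵖ N]
    [Module S L] [Module ((A t)ᵐᵒᵖ) L] [SMulCommClass S ((A t)ᵐᵒᵖ) L]
    (mc : MoritaCtx (A t) S N L)
    (A' : Fin n → Type u) (M' : Fin n → Fin n → Type u)
    [∀ i, Ring (A' i)] [∀ i j, AddCommGroup (M' i j)]
    [∀ i j, Module (A' i) (M' i j)] [∀ i j, Module ((A' j)ᵐᵒᵖ) (M' i j)]
    [∀ i j, SMulCommClass (A' i) ((A' j)ᵐᵒᵖ) (M' i j)]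
    (cs : CompSetup A M t S N L A' M')
    (ctx' : GenMoritaCtx n A' M')
    (hcomp : IsComposition A M t S N L A' M' ctx mc cs ctx')
    (Λ : Type u) [Ring Λ] (εΛ : Λ → ∀ i j, M i j) (hΛ : IsMatrixRing ctx Λ εΛ)
    (Λ' : Type u) [Ring Λ'] (εΛ' : Λ' → ∀ i j, M' i j) (hΛ' : IsMatrixRing ctx' Λ' εΛ')
    (LL : Fin n → Fin n → Type u) [∀ i j, AddCommGroup (LL i j)]
    (re : RowExc A M t L LL) :
    ∃ (γ' : ∀ i k j, M' i k → LL k j → LL i j)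
      (γ : ∀ i k j, LL i k → M k j → LL i j)
      (instL : Module Λ' (∀ i j, LL i j))
      (instR : Module Λᵐᵒᵖ (∀ i j, LL i j)),
      RowExcLeft A M t S N L A' M' LL ctx mc cs re γ' ∧
      RowExcRight A M t L LL ctx re γ ∧
      (∀ (c' : Λ') (y : ∀ i j, LL i j) (i j : Fin n),
        msmul instL c' y i j = ∑ k, γ' i k j (εΛ' c' i k) (y k j)) ∧
      (∀ (c : Λ) (y : ∀ i j, LL i j) (i j : Fin n),
        msmul instR (op c) y i j = ∑ k, γ i k j (y i k) (εΛ c k j)) ∧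
      (∀ (c' : Λ') (c : Λ) (y : ∀ i j, LL i j),
        msmul instL c' (msmul instR (op c) y) = msmul instR (op c) (msmul instL c' y)) := by
  classical
  have hez' : εΛ' 0 = 0 := by
    have h := hΛ'.map_add 0 0
    rw [add_zero] at h
    exact left_eq_add.mp h
  have hez : εΛ 0 = 0 := by
    have h := hΛ.map_add 0 0
    rw [add_zero] at h
    exact left_eq_add.mp h
  refine ⟨fun i k j x y => lGamma ctx t S N L mc A' M' cs LL re i k j x y,
          fun i k j x y => rGamma ctx t S N L mc A' M' cs LL re i k j x y,
          { smul := fun c y i j =>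
              ∑ k, lGamma ctx t S N L mc A' M' cs LL re i k j (εΛ' c i k) (y k j)
            one_smul := ?_
            mul_smul := ?_
            smul_zero := ?_
            smul_add := ?_
            add_smul := ?_
            zero_smul := ?_ },
          { smul := fun c y i j =>
              ∑ k, rGamma ctx t S N L mc A' M' cs LL re i k j (y i k) (εΛ c.unop k j)
            one_smul := ?_
            mul_smul := ?_
            smul_zero := ?_
            smul_add := ?_
            add_smul := ?_
            zero_smul := ?_ },
          ⟨?_, ?_, ?_, ?_, ?_, ?_⟩, ⟨?_, ?_, ?_, ?_⟩, ?_, ?_, ?_⟩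
  swap
  -- left module: one_smul
  · intro y
    funext i j
    show (∑ k, lGamma ctx t S N L mc A' M' cs LL re i k j (εΛ' 1 i k) (y k j)) = y i j
    rw [hΛ'.map_one]
    refine (Finset.sum_eq_single i ?_ ?_).trans ?_
    · intro b _ hb
      rw [matOne_off ctx' (Ne.symm hb)]
      simp only [map_zero, AddMonoidHom.zero_apply]
    · intro hmem
      exact absurd (Finset.mem_univ i) hmem
    · rw [matOne_diag]
      exact idLeft ctx t S N L mc A' M' cs LL re ctx' hcomp i j (y i j)
  -- left module: mul_smul
  · intro a b y
    funext i j
    show (∑ k, lGamma ctx t S N L mc A' M' cs LL re i k j (εΛ' (a * b) i k) (y k j))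
      = ∑ h', lGamma ctx t S N L mc A' M' cs LL re i h' j (εΛ' a i h')
          (∑ k, lGamma ctx t S N L mc A' M' cs LL re h' k j (εΛ' b h' k) (y k j))
    rw [hΛ'.map_mul]
    calc (∑ k, lGamma ctx t S N L mc A' M' cs LL re i k j
            (matMul ctx' (εΛ' a) (εΛ' b) i k) (y k j))
        = ∑ k, ∑ h', lGamma ctx t S N L mc A' M' cs LL re i k j
            (phiHom ctx' i h' k (εΛ' a i h') (εΛ' b h' k)) (y k j) := by
          refine Finset.sum_congr rfl fun k _ => ?_
          show lGamma ctx t S N L mc A' M' cs LL re i k j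
            (∑ h', phiHom ctx' i h' k (εΛ' a i h') (εΛ' b h' k)) (y k j) = _
          rw [map_sum, AddMonoidHom.finset_sum_apply]
      _ = ∑ k, ∑ h', lGamma ctx t S N L mc A' M' cs LL re i h' j (εΛ' a i h')
            (lGamma ctx t S N L mc A' M' cs LL re h' k j (εΛ' b h' k) (y k j)) :=
          Finset.sum_congr rfl fun k _ => Finset.sum_congr rfl fun h' _ =>
            assocL ctx t S N L mc A' M' cs LL re ctx' hcomp i h' k j _ _ _
      _ = ∑ h', ∑ k, lGamma ctx t S N L mc A' M' cs LL re i h' j (εΛ' a i h')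
            (lGamma ctx t S N L mc A' M' cs LL re h' k j (εΛ' b h' k) (y k j)) :=
          Finset.sum_comm
      _ = ∑ h', lGamma ctx t S N L mc A' M' cs LL re i h' j (εΛ' a i h')
            (∑ k, lGamma ctx t S N L mc A' M' cs LL re h' k j (εΛ' b h' k) (y k j)) := by
          refine Finset.sum_congr rfl fun h' _ => ?_
          rw [map_sum]
  -- left module: smul_zero
  · intro c
    funext i j
    show (∑ k, lGamma ctx t S N L mc A' M' cs LL re i k j (εΛ' c i k) (0 : LL k j))
      = (0 : LL i j)
    simp only [map_zero, Finset.sum_const_zero]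
  -- left module: smul_add
  · intro c y z
    funext i j
    show (∑ k, lGamma ctx t S N L mc A' M' cs LL re i k j (εΛ' c i k) (y k j + z k j))
      = (∑ k, lGamma ctx t S N L mc A' M' cs LL re i k j (εΛ' c i k) (y k j))
        + ∑ k, lGamma ctx t S N L mc A' M' cs LL re i k j (εΛ' c i k) (z k j)
    simp only [map_add, Finset.sum_add_distrib]
  -- left module: add_smul
  · intro a b y
    funext i j
    show (∑ k, lGamma ctx t S N L mc A' M' cs LL re i k j (εΛ' (a + b) i k) (y k j))
      = (∑ k, lGamma ctx t S N L mc A' M' cs LL re i k j (εΛ' a i k) (y k j))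
        + ∑ k, lGamma ctx t S N L mc A' M' cs LL re i k j (εΛ' b i k) (y k j)
    rw [hΛ'.map_add]
    simp only [Pi.add_apply, map_add, AddMonoidHom.add_apply, Finset.sum_add_distrib]
  -- left module: zero_smul
  · intro y
    funext i j
    show (∑ k, lGamma ctx t S N L mc A' M' cs LL re i k j (εΛ' 0 i k) (y k j)) = (0 : LL i j)
    rw [hez']
    simp only [Pi.zero_apply, map_zero, AddMonoidHom.zero_apply, Finset.sum_const_zero]
  swap
  -- right module: one_smul
  · intro y
    funext i j
    show (∑ k, rGamma ctx t S N L mc A' M' cs LL re i k j (y i k)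
        (εΛ (MulOpposite.unop 1) k j)) = y i j
    rw [MulOpposite.unop_one, hΛ.map_one]
    refine (Finset.sum_eq_single j ?_ ?_).trans ?_
    · intro b _ hb
      rw [matOne_off ctx hb]
      simp only [map_zero]
    · intro hmem
      exact absurd (Finset.mem_univ j) hmem
    · rw [matOne_diag]
      exact idRight ctx t S N L mc A' M' cs LL re i j (y i j)
  -- right module: mul_smul
  · intro a b y
    funext i j
    show (∑ k, rGamma ctx t S N L mc A' M' cs LL re i k j (y i k)
        (εΛ (MulOpposite.unop (a * b)) k j))
      = ∑ h', rGamma ctx t S N L mc A' M' cs LL re i h' j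
          (∑ k, rGamma ctx t S N L mc A' M' cs LL re i k h' (y i k)
            (εΛ (MulOpposite.unop b) k h'))
          (εΛ (MulOpposite.unop a) h' j)
    rw [MulOpposite.unop_mul, hΛ.map_mul]
    calc (∑ k, rGamma ctx t S N L mc A' M' cs LL re i k j (y i k)
            (matMul ctx (εΛ (MulOpposite.unop b)) (εΛ (MulOpposite.unop a)) k j))
        = ∑ k, ∑ h', rGamma ctx t S N L mc A' M' cs LL re i k j (y i k)
            (ctx.φ k h' j (εΛ (MulOpposite.unop b) k h') (εΛ (MulOpposite.unop a) h' j)) := by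
          refine Finset.sum_congr rfl fun k _ => ?_
          show rGamma ctx t S N L mc A' M' cs LL re i k j (y i k)
            (∑ h', ctx.φ k h' j (εΛ (MulOpposite.unop b) k h') (εΛ (MulOpposite.unop a) h' j)) = _
          rw [map_sum]
      _ = ∑ k, ∑ h', rGamma ctx t S N L mc A' M' cs LL re i h' j
            (rGamma ctx t S N L mc A' M' cs LL re i k h' (y i k) (εΛ (MulOpposite.unop b) k h'))
            (εΛ (MulOpposite.unop a) h' j) :=
          Finset.sum_congr rfl fun k _ => Finset.sum_congr rfl fun h' _ =>
            (assocR ctx t S N L mc A' M' cs LL re i k h' j _ _ _).symm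
      _ = ∑ h', ∑ k, rGamma ctx t S N L mc A' M' cs LL re i h' j
            (rGamma ctx t S N L mc A' M' cs LL re i k h' (y i k) (εΛ (MulOpposite.unop b) k h'))
            (εΛ (MulOpposite.unop a) h' j) := Finset.sum_comm
      _ = ∑ h', rGamma ctx t S N L mc A' M' cs LL re i h' j
            (∑ k, rGamma ctx t S N L mc A' M' cs LL re i k h' (y i k)
              (εΛ (MulOpposite.unop b) k h'))
            (εΛ (MulOpposite.unop a) h' j) := by
          refine Finset.sum_congr rfl fun h' _ => ?_
          rw [map_sum, AddMonoidHom.finset_sum_apply]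
  -- right module: smul_zero
  · intro c
    funext i j
    show (∑ k, rGamma ctx t S N L mc A' M' cs LL re i k j (0 : LL i k)
      (εΛ c.unop k j)) = (0 : LL i j)
    simp only [map_zero, AddMonoidHom.zero_apply, Finset.sum_const_zero]
  -- right module: smul_add
  · intro c y z
    funext i j
    show (∑ k, rGamma ctx t S N L mc A' M' cs LL re i k j (y i k + z i k) (εΛ c.unop k j))
      = (∑ k, rGamma ctx t S N L mc A' M' cs LL re i k j (y i k) (εΛ c.unop k j))
        + ∑ k, rGamma ctx t S N L mc A' M' cs LL re i k j (z i k) (εΛ c.unop k j)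
    simp only [map_add, AddMonoidHom.add_apply, Finset.sum_add_distrib]
  -- right module: add_smul
  · intro a b y
    funext i j
    show (∑ k, rGamma ctx t S N L mc A' M' cs LL re i k j (y i k)
        (εΛ (MulOpposite.unop (a + b)) k j))
      = (∑ k, rGamma ctx t S N L mc A' M' cs LL re i k j (y i k)
          (εΛ (MulOpposite.unop a) k j))
        + ∑ k, rGamma ctx t S N L mc A' M' cs LL re i k j (y i k)
            (εΛ (MulOpposite.unop b) k j)
    rw [MulOpposite.unop_add, hΛ.map_add]
    simp only [Pi.add_apply, map_add, Finset.sum_add_distrib]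
  -- right module: zero_smul
  · intro y
    funext i j
    show (∑ k, rGamma ctx t S N L mc A' M' cs LL re i k j (y i k)
        (εΛ (MulOpposite.unop 0) k j)) = (0 : LL i j)
    rw [MulOpposite.unop_zero, hez]
    simp only [Pi.zero_apply, map_zero, Finset.sum_const_zero]
  -- RowExcLeft fields
  · intro i k j x x' y
    simp only [map_add, AddMonoidHom.add_apply]
  · intro i k j x y y'
    simp only [map_add]
  · intro i k j hi hk x y
    exact lGamma_spec₁ ctx t S N L mc A' M' cs LL re i k j hi hk x y
  · intro k j hk l m y
    exact lGamma_spec₂ ctx t S N L mc A' M' cs LL re k j hk l m y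
  · intro i j hi m nn l m'
    exact lGamma_spec₃ ctx t S N L mc A' M' cs LL re i j hi m nn l m'
  · intro j s l m
    exact lGamma_spec₄ ctx t S N L mc A' M' cs LL re j s l m
  -- RowExcRight fields
  · intro i k j x x' y
    simp only [map_add, AddMonoidHom.add_apply]
  · intro i k j x y y'
    simp only [map_add]
  · intro i k j hi x y
    exact rGamma_el ctx t S N L mc A' M' cs LL re i k j hi x y
  · intro k j l m y
    exact rGamma_lp ctx t S N L mc A' M' cs LL re k j l m y
  -- msmul left formula
  · intro c' y i j
    rfl
  -- msmul right formula
  · intro c y i j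
    rfl
  -- the two actions commute
  · intro c' c y
    funext i j
    show (∑ k, lGamma ctx t S N L mc A' M' cs LL re i k j (εΛ' c' i k)
        (∑ h', rGamma ctx t S N L mc A' M' cs LL re k h' j (y k h') (εΛ c h' j)))
      = ∑ h', rGamma ctx t S N L mc A' M' cs LL re i h' j
          (∑ k, lGamma ctx t S N L mc A' M' cs LL re i k h' (εΛ' c' i k) (y k h'))
          (εΛ c h' j)
    calc (∑ k, lGamma ctx t S N L mc A' M' cs LL re i k j (εΛ' c' i k)
            (∑ h', rGamma ctx t S N L mc A' M' cs LL re k h' j (y k h') (εΛ c h' j)))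
        = ∑ k, ∑ h', lGamma ctx t S N L mc A' M' cs LL re i k j (εΛ' c' i k)
            (rGamma ctx t S N L mc A' M' cs LL re k h' j (y k h') (εΛ c h' j)) := by
          refine Finset.sum_congr rfl fun k _ => ?_
          rw [map_sum]
      _ = ∑ k, ∑ h', rGamma ctx t S N L mc A' M' cs LL re i h' j
            (lGamma ctx t S N L mc A' M' cs LL re i k h' (εΛ' c' i k) (y k h'))
            (εΛ c h' j) :=
          Finset.sum_congr rfl fun k _ => Finset.sum_congr rfl fun h' _ =>
            commuteLR ctx t S N L mc A' M' cs LL re i k h' j _ _ _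
      _ = ∑ h', ∑ k, rGamma ctx t S N L mc A' M' cs LL re i h' j
            (lGamma ctx t S N L mc A' M' cs LL re i k h' (εΛ' c' i k) (y k h'))
            (εΛ c h' j) := Finset.sum_comm
      _ = ∑ h', rGamma ctx t S N L mc A' M' cs LL re i h' j
            (∑ k, lGamma ctx t S N L mc A' M' cs LL re i k h' (εΛ' c' i k) (y k h'))
            (εΛ c h' j) := by
          refine Finset.sum_congr rfl fun h' _ => ?_
          rw [map_sum, AddMonoidHom.finset_sum_apply]
end

section
/- In the setting of a generalised Morita context (A_i; M_ij; φ_ikj) of size n with A_t = R, a Morita context (R, S; N, L; ζ, θ), their composition (A′_i; M′_ij; φ′_ikj), the column-excision N_m (with its [A_i; M_ij]–[A′_i; M′_ij]-bimodule structure) and the row-excision L_m (with its [A′_i; M′_ij]–[A_i; M_ij]-bimodule structure), the column-row ligation |α| : N_m × L_m → [A_i; M_ij] is [A′_i; M′_ij]-balanced: |α|(x·c, y) = |α|(x, c·y) for all x ∈ N_m, y ∈ L_m and c ∈ [A′_i; M′_ij]. Consequently |α| factors through an additive map N_m ⊗_{[A′_i; M′_ij]} L_m → [A_i; M_ij]. 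-/
universe u

open MulOpposite

variable {n : ℕ} {A : Fin n → Type u} {M : Fin n → Fin n → Type u}
    [∀ i, Ring (A i)] [∀ i j, AddCommGroup (M i j)]
    [∀ i j, Module (A i) (M i j)] [∀ i j, Module ((A j)ᵐᵒᵖ) (M i j)]
    [∀ i j, SMulCommClass (A i) ((A j)ᵐᵒᵖ) (M i j)]

/-!
Both sides of `|α|(x·c', y) = |α|(x, c'·y)` expand into double sums over `h, k` of
`α_ikj(β'_ihk(x_ih, c'_hk), y_kj)` and `α_ihj(x_ih, γ'_hkj(c'_hk, y_kj))` respectively, so it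
suffices to compare these terms. All maps involved are additive in each argument and every
`N_ih`, `M'_hk`, `L_kj` is either identified with some `M_ab` or generated by pure tensors, so
the comparison reduces, according to whether `h` and `k` equal `t`, to the associativity of
the `φ_ikj` and the balancedness `ζ(n·s ⊗ l) = ζ(n ⊗ s·l)`. The factorisation through
`N_m ⊗ L_m` is then the universal property of the tensor product.
-/

section BTensor

variable {A : Type u} [Ring A] {M X : Type u} [AddCommGroup M] [AddCommGroup X]
  {ra : M → A → M} {la : A → X → X} {T : Type u} [AddCommGroup T] {τ : M → X → T}

theorem IsBTensor.tensorSurj (ht : IsBTensor A ra la T τ) : TensorSurj τ := by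
  set G := AddSubgroup.closure {z : T | ∃ m x, z = τ m x}
  have hzero : IsBalancedMap A ra la (fun _ _ => (0 : T ⧸ G)) := ⟨by simp, by simp, by simp⟩
  obtain ⟨_, -, huniq⟩ := ht.lift (T ⧸ G) _ hzero
  -- both the quotient map and `0` lift the zero map, so they coincide
  have hmk : QuotientAddGroup.mk' G = 0 :=
    (huniq _ fun m x => (QuotientAddGroup.eq_zero_iff _).2
      (AddSubgroup.subset_closure (k := {z | ∃ m x, z = τ m x}) ⟨m, x, rfl⟩)).trans
      (huniq 0 fun _ _ => rfl).symm
  exact eq_top_iff.2 fun z _ => (QuotientAddGroup.eq_zero_iff z).1 (DFunLike.congr_fun hmk z)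

theorem IsBTensor.induction_on (ht : IsBTensor A ra la T τ) {motive : T → Prop} (z : T)
    (tmul : ∀ m x, motive (τ m x)) (add : ∀ a b, motive a → motive b → motive (a + b)) :
    motive z := by
  have hz : z ∈ AddSubgroup.closure {z : T | ∃ m x, z = τ m x} := ht.tensorSurj ▸ trivial
  let τx (x : X) : M →+ T := AddMonoidHom.mk' (τ · x) fun m m' => ht.balanced.1 m m' x
  -- pure tensors include `0` and are closed under negation, so `add` is the only closure case
  induction hz using AddSubgroup.closure_induction'' with
  | mem _ h => obtain ⟨m, x, rfl⟩ := h; exact tmul m x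
  | neg_mem _ h =>
    obtain ⟨m, x, rfl⟩ := h
    rw [← show τ (-m) x = -τ m x from (τx x).map_neg m]
    exact tmul (-m) x
  | zero =>
    rw [← show τ 0 0 = 0 from (τx 0).map_zero]
    exact tmul 0 0
  | add a b _ _ ha hb => exact add a b ha hb

end BTensor

theorem IsBalancedMap.of_comp {A : Type u} [Ring A] {M X Z W : Type u}
    [AddCommGroup M] [AddCommGroup X] [AddCommGroup Z] [AddCommGroup W]
    {ra : M → A → M} {la : A → X → X} {g : M → X → Z}
    (e : Z →+ W) (he : Function.Injective e) (h : IsBalancedMap A ra la fun m x => e (g m x)) :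
    IsBalancedMap A ra la g :=
  ⟨fun m m' x => he (by simpa using h.1 m m' x),
    fun m x x' => he (by simpa using h.2.1 m x x'),
    fun a m x => he (h.2.2 a m x)⟩

section MatPairing

variable {ι : Type*} [Fintype ι] {X Y Z : ι → ι → Type*} [∀ i j, AddCommGroup (Z i j)]

def matPairing (α : ∀ i k j, X i k → Y k j → Z i j) (x : ∀ i j, X i j)
    (y : ∀ i j, Y i j) : ∀ i j, Z i j :=
  fun i j => ∑ k, α i k j (x i k) (y k j)

variable {α : ∀ i k j, X i k → Y k j → Z i j}

theorem matPairing_add_left [∀ i j, AddCommGroup (X i j)]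
    (hα : ∀ i k j x x' y, α i k j (x + x') y = α i k j x y + α i k j x' y)
    (x x' : ∀ i j, X i j) (y : ∀ i j, Y i j) :
    matPairing α (x + x') y = matPairing α x y + matPairing α x' y := by
  funext i j
  simp only [matPairing, Pi.add_apply, hα, Finset.sum_add_distrib]

theorem matPairing_add_right [∀ i j, AddCommGroup (Y i j)]
    (hα : ∀ i k j x y y', α i k j x (y + y') = α i k j x y + α i k j x y')
    (x : ∀ i j, X i j) (y y' : ∀ i j, Y i j) :
    matPairing α x (y + y') = matPairing α x y + matPairing α x y' := by
  funext i j
  simp only [matPairing, Pi.add_apply, hα, Finset.sum_add_distrib]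

theorem matPairing_assoc [∀ i j, AddCommGroup (X i j)] [∀ i j, AddCommGroup (Y i j)]
    {W : ι → ι → Type*}
    {β : ∀ i h k, X i h → W h k → X i k} {γ : ∀ h k j, W h k → Y k j → Y h j}
    (hα_left : ∀ i k j x x' y, α i k j (x + x') y = α i k j x y + α i k j x' y)
    (hα_right : ∀ i k j x y y', α i k j x (y + y') = α i k j x y + α i k j x y')
    (hbal : ∀ i h k j u w v, α i k j (β i h k u w) v = α i h j u (γ h k j w v))
    (x : ∀ i j, X i j) (c : ∀ i j, W i j) (y : ∀ i j, Y i j) :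
    matPairing α (fun i k => ∑ h, β i h k (x i h) (c h k)) y
      = matPairing α x (fun h j => ∑ k, γ h k j (c h k) (y k j)) := by
  funext i j
  calc ∑ k, α i k j (∑ h, β i h k (x i h) (c h k)) (y k j)
      = ∑ k, ∑ h, α i k j (β i h k (x i h) (c h k)) (y k j) := by
        congr! 1 with k
        exact map_sum (AddMonoidHom.mk' (α i k j · (y k j)) (hα_left i k j · · _)) _ _
    _ = ∑ h, ∑ k, α i h j (x i h) (γ h k j (c h k) (y k j)) := by
        rw [Finset.sum_comm]
        simp only [hbal]
    _ = ∑ h, α i h j (x i h) (∑ k, γ h k j (c h k) (y k j)) := by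
        congr! 1 with h
        exact (map_sum (AddMonoidHom.mk' (α i h j (x i h)) (hα_right i h j _)) _ _).symm

end MatPairing


section Ligation

variable {t : Fin n} {S N L : Type u} [Ring S] [AddCommGroup N] [AddCommGroup L]
  [Module (A t) N] [Module Sᵐᵒᵖ N] [SMulCommClass (A t) Sᵐᵒᵖ N]
  [Module S L] [Module ((A t)ᵐᵒᵖ) L] [SMulCommClass S ((A t)ᵐᵒᵖ) L]
  {A' : Fin n → Type u} {M' : Fin n → Fin n → Type u}
  [∀ i, Ring (A' i)] [∀ i j, AddCommGroup (M' i j)]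
  [∀ i j, Module (A' i) (M' i j)] [∀ i j, Module ((A' j)ᵐᵒᵖ) (M' i j)]
  {NN LL : Fin n → Fin n → Type u} [∀ i j, AddCommGroup (NN i j)]
  [∀ i j, AddCommGroup (LL i j)]
  {ctx : GenMoritaCtx n A M} {mc : MoritaCtx (A t) S N L} {cs : CompSetup A M t S N L A' M'}
  {ce : ColExc A M t N NN} {re : RowExc A M t L LL}
  {α : ∀ i k j, NN i k → LL k j → M i j} {β' : ∀ i k j, NN i k → M' k j → NN i j}
  {γ' : ∀ i k j, M' i k → LL k j → LL i j}

namespace ColRowLigation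

theorem balanced_t_t (hα : ColRowLigation A M t S N L NN LL ctx mc ce re α)
    (hβ' : ColExcRight A M t S N L A' M' NN ctx mc cs ce β')
    (hγ' : RowExcLeft A M t S N L A' M' LL ctx mc cs re γ')
    (i j : Fin n) (u : NN i t) (w : M' t t) (v : LL t j) :
    α i t j (β' i t t u w) v = α i t j u (γ' t t j w v) := by
  obtain ⟨s, rfl⟩ := cs.uS.surjective w
  induction u using (ce.π_tensor i).induction_on with
  | tmul m x =>
    induction v using (re.lp_tensor j).induction_on with
    | tmul l m' => rw [hβ'.spec₄, hγ'.spec₄, hα.spec_t, hα.spec_t, mc.zeta_balanced]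
    | add v v' hv hv' => simp only [hγ'.add_right, hα.add_right, hv, hv']
  | add u u' hu hu' => simp only [hβ'.add_left, hα.add_left, hu, hu']

theorem balanced_t_ne (hα : ColRowLigation A M t S N L NN LL ctx mc ce re α)
    (hβ' : ColExcRight A M t S N L A' M' NN ctx mc cs ce β')
    (hγ' : RowExcLeft A M t S N L A' M' LL ctx mc cs re γ')
    {k : Fin n} (hk : k ≠ t) (i j : Fin n) (u : NN i t) (w : M' t k) (v : LL k j) :
    α i k j (β' i t k u w) v = α i t j u (γ' t k j w v) := by
  obtain ⟨y, rfl⟩ := (re.el k j hk).surjective v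
  induction u using (ce.π_tensor i).induction_on with
  | tmul m x =>
    induction w using (cs.tmulL_tensor k hk).induction_on with
    | tmul l m' =>
      rw [hβ'.spec₃, hα.spec_ne, hγ'.spec₂, hα.spec_t, ctx.φ_assoc]
    | add w w' hw hw' =>
      simp only [hβ'.add_right, hγ'.add_left, hα.add_left, hα.add_right, hw, hw']
  | add u u' hu hu' => simp only [hβ'.add_left, hα.add_left, hu, hu']

theorem balanced_ne_t (hα : ColRowLigation A M t S N L NN LL ctx mc ce re α)
    (hβ' : ColExcRight A M t S N L A' M' NN ctx mc cs ce β')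
    (hγ' : RowExcLeft A M t S N L A' M' LL ctx mc cs re γ')
    {h : Fin n} (hh : h ≠ t) (i j : Fin n) (u : NN i h) (w : M' h t) (v : LL t j) :
    α i t j (β' i h t u w) v = α i h j u (γ' h t j w v) := by
  obtain ⟨x, rfl⟩ := (ce.en i h hh).surjective u
  induction w using (cs.tmulN_tensor h hh).induction_on with
  | tmul m nn =>
    induction v using (re.lp_tensor j).induction_on with
    | tmul l m' =>
      rw [hβ'.spec₂, hα.spec_t, hγ'.spec₃, hα.spec_ne, ← ctx.φ_smul_right, ctx.φ_assoc]
    | add v v' hv hv' => simp only [hγ'.add_right, hα.add_right, hv, hv']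
  | add w w' hw hw' =>
    simp only [hβ'.add_right, hγ'.add_left, hα.add_left, hα.add_right, hw, hw']

theorem balanced_ne_ne (hα : ColRowLigation A M t S N L NN LL ctx mc ce re α)
    (hβ' : ColExcRight A M t S N L A' M' NN ctx mc cs ce β')
    (hγ' : RowExcLeft A M t S N L A' M' LL ctx mc cs re γ')
    {h k : Fin n} (hh : h ≠ t) (hk : k ≠ t) (i j : Fin n)
    (u : NN i h) (w : M' h k) (v : LL k j) :
    α i k j (β' i h k u w) v = α i h j u (γ' h k j w v) := by
  obtain ⟨x, rfl⟩ := (ce.en i h hh).surjective u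
  obtain ⟨z, rfl⟩ := (cs.ee h k hh hk).surjective w
  obtain ⟨y, rfl⟩ := (re.el k j hk).surjective v
  rw [hβ'.spec₁, hα.spec_ne, hγ'.spec₁, hα.spec_ne, ctx.φ_assoc]

theorem balanced (hα : ColRowLigation A M t S N L NN LL ctx mc ce re α)
    (hβ' : ColExcRight A M t S N L A' M' NN ctx mc cs ce β')
    (hγ' : RowExcLeft A M t S N L A' M' LL ctx mc cs re γ')
    (i h k j : Fin n) (u : NN i h) (w : M' h k) (v : LL k j) :
    α i k j (β' i h k u w) v = α i h j u (γ' h k j w v) := by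
  rcases eq_or_ne t h with rfl | hh <;> rcases eq_or_ne t k with rfl | hk
  · exact hα.balanced_t_t hβ' hγ' i j u w v
  · exact hα.balanced_t_ne hβ' hγ' hk.symm i j u w v
  · exact hα.balanced_ne_t hβ' hγ' hh.symm i j u w v
  · exact hα.balanced_ne_ne hβ' hγ' hh.symm hk.symm i j u w v

theorem isBalancedMap_matPairing (hα : ColRowLigation A M t S N L NN LL ctx mc ce re α)
    (hβ' : ColExcRight A M t S N L A' M' NN ctx mc cs ce β')
    (hγ' : RowExcLeft A M t S N L A' M' LL ctx mc cs re γ')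
    {Λ' : Type u} [Ring Λ'] {εΛ' : Λ' → ∀ i j, M' i j}
    [SMul Λ'ᵐᵒᵖ (∀ i j, NN i j)] [SMul Λ' (∀ i j, LL i j)]
    (hNsmulR : ∀ (c' : Λ') (x : ∀ i j, NN i j) (i j : Fin n),
      (op c' • x) i j = ∑ k, β' i k j (x i k) (εΛ' c' k j))
    (hLsmulL : ∀ (c' : Λ') (y : ∀ i j, LL i j) (i j : Fin n),
      (c' • y) i j = ∑ k, γ' i k j (εΛ' c' i k) (y k j)) :
    IsBalancedMap Λ' (fun (x : ∀ i j, NN i j) (c' : Λ') => op c' • x)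
      (fun (c' : Λ') (y : ∀ i j, LL i j) => c' • y) (matPairing α) := by
  refine ⟨matPairing_add_left hα.add_left, matPairing_add_right hα.add_right,
    fun c' x y => ?_⟩
  change matPairing α (op c' • x) y = matPairing α x (c' • y)
  rw [funext₂ (hNsmulR c' x), funext₂ (hLsmulL c' y)]
  exact matPairing_assoc hα.add_left hα.add_right (hα.balanced hβ' hγ') x (εΛ' c') y

end ColRowLigation

end Ligation

theorem stmt7_general {n : ℕ} {A : Fin n → Type u} {M : Fin n → Fin n → Type u}
    [∀ i, Ring (A i)] [∀ i j, AddCommGroup (M i j)]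
    [∀ i j, Module (A i) (M i j)] [∀ i j, Module ((A j)ᵐᵒᵖ) (M i j)]
    [∀ i j, SMulCommClass (A i) ((A j)ᵐᵒᵖ) (M i j)]
    (ctx : GenMoritaCtx n A M) (t : Fin n)
    (S N L : Type u) [Ring S] [AddCommGroup N] [AddCommGroup L]
    [Module (A t) N] [Module Sᵐᵒᵖ N] [SMulCommClass (A t) Sᵐᵒᵖ N]
    [Module S L] [Module ((A t)ᵐᵒᵖ) L] [SMulCommClass S ((A t)ᵐᵒᵖ) L]
    (mc : MoritaCtx (A t) S N L)
    (A' : Fin n → Type u) (M' : Fin n → Fin n → Type u)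
    [∀ i, Ring (A' i)] [∀ i j, AddCommGroup (M' i j)]
    [∀ i j, Module (A' i) (M' i j)] [∀ i j, Module ((A' j)ᵐᵒᵖ) (M' i j)]
    (cs : CompSetup A M t S N L A' M')
    (Λ : Type u) [Ring Λ] (εΛ : Λ → ∀ i j, M i j) (hΛ : IsMatrixRing ctx Λ εΛ)
    (Λ' : Type u) [Ring Λ'] (εΛ' : Λ' → ∀ i j, M' i j)
    (NN : Fin n → Fin n → Type u) [∀ i j, AddCommGroup (NN i j)]
    (ce : ColExc A M t N NN)
    (LL : Fin n → Fin n → Type u) [∀ i j, AddCommGroup (LL i j)]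
    (re : RowExc A M t L LL)
    -- the [A_i; M_ij]–[A'_i; M'_ij]-bimodule structure on the column-excision N_m
    [Module Λ'ᵐᵒᵖ (∀ i j, NN i j)]
    (β' : ∀ i k j, NN i k → M' k j → NN i j)
    (hβ' : ColExcRight A M t S N L A' M' NN ctx mc cs ce β')
    (hNsmulR : ∀ (c' : Λ') (x : ∀ i j, NN i j) (i j : Fin n),
      (op c' • x) i j = ∑ k, β' i k j (x i k) (εΛ' c' k j))
    -- the [A'_i; M'_ij]–[A_i; M_ij]-bimodule structure on the row-excision L_m
    [Module Λ' (∀ i j, LL i j)]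
    (γ' : ∀ i k j, M' i k → LL k j → LL i j)
    (hγ' : RowExcLeft A M t S N L A' M' LL ctx mc cs re γ')
    (hLsmulL : ∀ (c' : Λ') (y : ∀ i j, LL i j) (i j : Fin n),
      (c' • y) i j = ∑ k, γ' i k j (εΛ' c' i k) (y k j))
    -- the column-row ligation and the map |α| it induces into Λ = [A_i; M_ij]
    (α : ∀ i k j, NN i k → LL k j → M i j)
    (hα : ColRowLigation A M t S N L NN LL ctx mc ce re α)
    (Abar : (∀ i j, NN i j) → (∀ i j, LL i j) → Λ)
    (hAbar : ∀ x y, εΛ (Abar x y) = fun i j => ∑ k, α i k j (x i k) (y k j)) :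
    (∀ (x : ∀ i j, NN i j) (y : ∀ i j, LL i j) (c' : Λ'),
      Abar (op c' • x) y = Abar x (c' • y)) ∧
    (∀ (T : Type u) [AddCommGroup T]
        (τT : (∀ i j, NN i j) → (∀ i j, LL i j) → T),
      IsBTensor Λ' (fun (x : ∀ i j, NN i j) (c' : Λ') => op c' • x)
          (fun (c' : Λ') (y : ∀ i j, LL i j) => c' • y) T τT →
      ∃ g : T →+ Λ, ∀ x y, g (τT x y) = Abar x y) := by
  let ε : Λ →+ ∀ i j, M i j := AddMonoidHom.mk' εΛ hΛ.map_add
  have hεAbar : (fun x y => ε (Abar x y)) = matPairing α := funext₂ hAbar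
  have hbal : IsBalancedMap Λ' (fun (x : ∀ i j, NN i j) (c' : Λ') => op c' • x)
      (fun (c' : Λ') (y : ∀ i j, LL i j) => c' • y) Abar :=
    .of_comp ε hΛ.bijective.injective
      (hεAbar ▸ hα.isBalancedMap_matPairing hβ' hγ' hNsmulR hLsmulL)
  exact ⟨fun x y c' => hbal.2.2 c' x y, fun T _ τT hT => (hT.lift Λ Abar hbal).exists⟩

/-- the column-row ligation `|α| : N_m × L_m → [A_i; M_ij]` is
`[A'_i; M'_ij]`-balanced, i.e. `|α|(x·c', y) = |α|(x, c'·y)`; consequently it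
factors through an additive map `N_m ⊗_{[A'_i; M'_ij]} L_m → [A_i; M_ij]`. -/
theorem stmt7 {n : ℕ} {A : Fin n → Type u} {M : Fin n → Fin n → Type u}
    [∀ i, Ring (A i)] [∀ i j, AddCommGroup (M i j)]
    [∀ i j, Module (A i) (M i j)] [∀ i j, Module ((A j)ᵐᵒᵖ) (M i j)]
    [∀ i j, SMulCommClass (A i) ((A j)ᵐᵒᵖ) (M i j)]
    (ctx : GenMoritaCtx n A M) (t : Fin n)
    (S N L : Type u) [Ring S] [AddCommGroup N] [AddCommGroup L]
    [Module (A t) N] [Module Sᵐᵒᵖ N] [SMulCommClass (A t) Sᵐᵒᵖ N]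
    [Module S L] [Module ((A t)ᵐᵒᵖ) L] [SMulCommClass S ((A t)ᵐᵒᵖ) L]
    (mc : MoritaCtx (A t) S N L)
    (A' : Fin n → Type u) (M' : Fin n → Fin n → Type u)
    [∀ i, Ring (A' i)] [∀ i j, AddCommGroup (M' i j)]
    [∀ i j, Module (A' i) (M' i j)] [∀ i j, Module ((A' j)ᵐᵒᵖ) (M' i j)]
    [∀ i j, SMulCommClass (A' i) ((A' j)ᵐᵒᵖ) (M' i j)]
    (cs : CompSetup A M t S N L A' M')
    (ctx' : GenMoritaCtx n A' M')
    (hcomp : IsComposition A M t S N L A' M' ctx mc cs ctx')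
    (Λ : Type u) [Ring Λ] (εΛ : Λ → ∀ i j, M i j) (hΛ : IsMatrixRing ctx Λ εΛ)
    (Λ' : Type u) [Ring Λ'] (εΛ' : Λ' → ∀ i j, M' i j) (hΛ' : IsMatrixRing ctx' Λ' εΛ')
    (NN : Fin n → Fin n → Type u) [∀ i j, AddCommGroup (NN i j)]
    (ce : ColExc A M t N NN)
    (LL : Fin n → Fin n → Type u) [∀ i j, AddCommGroup (LL i j)]
    (re : RowExc A M t L LL)
    -- the [A_i; M_ij]–[A'_i; M'_ij]-bimodule structure on the column-excision N_m
    [Module Λ (∀ i j, NN i j)] [Module Λ'ᵐᵒᵖ (∀ i j, NN i j)]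
    [SMulCommClass Λ Λ'ᵐᵒᵖ (∀ i j, NN i j)]
    (β : ∀ i k j, M i k → NN k j → NN i j)
    (hβ : ColExcLeft A M t N NN ctx ce β)
    (β' : ∀ i k j, NN i k → M' k j → NN i j)
    (hβ' : ColExcRight A M t S N L A' M' NN ctx mc cs ce β')
    (hNsmulL : ∀ (c : Λ) (x : ∀ i j, NN i j) (i j : Fin n),
      (c • x) i j = ∑ k, β i k j (εΛ c i k) (x k j))
    (hNsmulR : ∀ (c' : Λ') (x : ∀ i j, NN i j) (i j : Fin n),
      (op c' • x) i j = ∑ k, β' i k j (x i k) (εΛ' c' k j))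
    -- the [A'_i; M'_ij]–[A_i; M_ij]-bimodule structure on the row-excision L_m
    [Module Λ' (∀ i j, LL i j)] [Module Λᵐᵒᵖ (∀ i j, LL i j)]
    [SMulCommClass Λ' Λᵐᵒᵖ (∀ i j, LL i j)]
    (γ' : ∀ i k j, M' i k → LL k j → LL i j)
    (hγ' : RowExcLeft A M t S N L A' M' LL ctx mc cs re γ')
    (γ : ∀ i k j, LL i k → M k j → LL i j)
    (hγ : RowExcRight A M t L LL ctx re γ)
    (hLsmulL : ∀ (c' : Λ') (y : ∀ i j, LL i j) (i j : Fin n),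
      (c' • y) i j = ∑ k, γ' i k j (εΛ' c' i k) (y k j))
    (hLsmulR : ∀ (c : Λ) (y : ∀ i j, LL i j) (i j : Fin n),
      (op c • y) i j = ∑ k, γ i k j (y i k) (εΛ c k j))
    -- the column-row ligation and the map |α| it induces into Λ = [A_i; M_ij]
    (α : ∀ i k j, NN i k → LL k j → M i j)
    (hα : ColRowLigation A M t S N L NN LL ctx mc ce re α)
    (Abar : (∀ i j, NN i j) → (∀ i j, LL i j) → Λ)
    (hAbar : ∀ x y, εΛ (Abar x y) = fun i j => ∑ k, α i k j (x i k) (y k j)) :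
    (∀ (x : ∀ i j, NN i j) (y : ∀ i j, LL i j) (c' : Λ'),
      Abar (op c' • x) y = Abar x (c' • y)) ∧
    (∀ (T : Type u) [AddCommGroup T]
        (τT : (∀ i j, NN i j) → (∀ i j, LL i j) → T),
      IsBTensor Λ' (fun (x : ∀ i j, NN i j) (c' : Λ') => op c' • x)
          (fun (c' : Λ') (y : ∀ i j, LL i j) => c' • y) T τT →
      ∃ g : T →+ Λ, ∀ x y, g (τT x y) = Abar x y) :=
  stmt7_general ctx t S N L mc A' M' cs Λ εΛ hΛ Λ' εΛ' NN ce LL re β' hβ' hNsmulR γ' hγ' hLsmulL α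
    hα Abar hAbar
end
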